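/- arXiv:2009.00183 — 15 statements merged into one kernel-verified Lean document; each statement's English description precedes it below -/
import Mathlib

section
/- Let C be a coalgebra over a field k, M a left C-comodule with coaction ρ : M → C ⊗ M, and T : M → M a left C-comodule map (i.e. ρ∘T = (id⊗T)∘ρ). Then for a scalar λ ∈ k the following are equivalent: (1) (M,T) is a generic Rota-Baxter paired C-comodule of weight λ, i.e. for every linear map P : C → C one has (P⊗T)∘ρ = (P⊗id)∘ρ∘T + (id⊗T)∘ρ∘T + λ·ρ∘T; (2) there exists a linear map P : C → C such that (P⊗T)∘ρ = (P⊗id)∘ρ∘T + (id⊗T)∘ρ∘T + λ·ρ∘T; (3) T is quasi-idempotent of weight λ, i.e. T∘T = -λ·T. -/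
open TensorProduct

/-- The Rota-Baxter paired left comodule condition of weight `lam`:
`(P ⊗ T) ∘ ρ = (P ⊗ id) ∘ ρ ∘ T + (id ⊗ T) ∘ ρ ∘ T + lam • (ρ ∘ T)`. -/
def RBPairedComodule {k C M : Type*} [Field k] [AddCommGroup C] [Module k C]
    [AddCommGroup M] [Module k M] (ρ : M →ₗ[k] C ⊗[k] M)
    (P : C →ₗ[k] C) (T : M →ₗ[k] M) (lam : k) : Prop :=
  TensorProduct.map P T ∘ₗ ρ =
    TensorProduct.map P LinearMap.id ∘ₗ ρ ∘ₗ T +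
      TensorProduct.map LinearMap.id T ∘ₗ ρ ∘ₗ T + lam • (ρ ∘ₗ T)

theorem stmt0 {k C M : Type*} [Field k] [AddCommGroup C] [Module k C] [Coalgebra k C]
    [AddCommGroup M] [Module k M] (ρ : M →ₗ[k] C ⊗[k] M)
    -- `M` is a left `C`-comodule:
    (hcoassoc : (TensorProduct.assoc k C C M).toLinearMap ∘ₗ
        TensorProduct.map Coalgebra.comul LinearMap.id ∘ₗ ρ =
        TensorProduct.map LinearMap.id ρ ∘ₗ ρ)
    (hcounit : (TensorProduct.lid k M).toLinearMap ∘ₗ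
        TensorProduct.map Coalgebra.counit LinearMap.id ∘ₗ ρ = LinearMap.id)
    -- `T` is a left `C`-comodule map:
    (T : M →ₗ[k] M) (hT : ρ ∘ₗ T = TensorProduct.map LinearMap.id T ∘ₗ ρ)
    (lam : k) :
    List.TFAE [
      -- (1) `(M,T)` is a generic Rota-Baxter paired `C`-comodule of weight `lam`
      ∀ P : C →ₗ[k] C, RBPairedComodule ρ P T lam,
      -- (2) there exists `P` making `(M,P,T)` a Rota-Baxter paired `C`-comodule of weight `lam`
      ∃ P : C →ₗ[k] C, RBPairedComodule ρ P T lam,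
      -- (3) `T` is quasi-idempotent of weight `lam`
      T ∘ₗ T = (-lam) • T] := by

  -- Reduce the RB condition to a `P`-free identity.
  have hred : ∀ P : C →ₗ[k] C, RBPairedComodule ρ P T lam ↔
      TensorProduct.map LinearMap.id (T ∘ₗ T + lam • T) ∘ₗ ρ = 0 := by
    intro P
    unfold RBPairedComodule
    have h1 : TensorProduct.map P LinearMap.id ∘ₗ ρ ∘ₗ T = TensorProduct.map P T ∘ₗ ρ := by
      rw [hT, ← LinearMap.comp_assoc, ← TensorProduct.map_comp]
      simp
    have hm : TensorProduct.map LinearMap.id T ∘ₗ TensorProduct.map LinearMap.id T +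
        lam • TensorProduct.map LinearMap.id T =
        TensorProduct.map (LinearMap.id : C →ₗ[k] C) (T ∘ₗ T + lam • T) := by
      ext c m
      simp [TensorProduct.tmul_add, TensorProduct.tmul_smul]
    have h2 : TensorProduct.map LinearMap.id T ∘ₗ ρ ∘ₗ T +
        lam • (ρ ∘ₗ T) = TensorProduct.map LinearMap.id (T ∘ₗ T + lam • T) ∘ₗ ρ := by
      rw [hT, ← LinearMap.comp_assoc, ← LinearMap.smul_comp, ← LinearMap.add_comp, hm]
    constructor
    · intro h
      rw [h1, add_assoc, h2] at h
      nth_rewrite 1 [show TensorProduct.map P T ∘ₗ ρ = TensorProduct.map P T ∘ₗ ρ + 0 by simp] at h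
      exact (add_left_cancel h).symm
    · intro h
      rw [h1, add_assoc, h2, h, add_zero]
  tfae_have 1 → 2 := fun h => ⟨LinearMap.id, h _⟩
  tfae_have 2 → 3 := by
    rintro ⟨P, hP⟩
    set S : M →ₗ[k] M := T ∘ₗ T + lam • T with hS
    have hz : TensorProduct.map (LinearMap.id : C →ₗ[k] C) S ∘ₗ ρ = 0 := (hred P).mp hP
    have hnat : S ∘ₗ (TensorProduct.lid k M).toLinearMap ∘ₗ
        TensorProduct.map (Coalgebra.counit : C →ₗ[k] k) (LinearMap.id : M →ₗ[k] M) =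
        (TensorProduct.lid k M).toLinearMap ∘ₗ
        TensorProduct.map (Coalgebra.counit : C →ₗ[k] k) (LinearMap.id : M →ₗ[k] M) ∘ₗ
        TensorProduct.map (LinearMap.id : C →ₗ[k] C) S := by
      ext c m
      simp
    have : S = 0 := by
      calc S = S ∘ₗ LinearMap.id := rfl
      _ = S ∘ₗ (TensorProduct.lid k M).toLinearMap ∘ₗ
            TensorProduct.map Coalgebra.counit LinearMap.id ∘ₗ ρ := by rw [hcounit]
      _ = (TensorProduct.lid k M).toLinearMap ∘ₗ
            TensorProduct.map Coalgebra.counit LinearMap.id ∘ₗ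
            (TensorProduct.map LinearMap.id S ∘ₗ ρ) := by
            rw [← LinearMap.comp_assoc ρ, ← LinearMap.comp_assoc, ← LinearMap.comp_assoc,
              ← LinearMap.comp_assoc] at *
            rw [hnat, LinearMap.comp_assoc]
      _ = 0 := by rw [hz]; simp
    have h3 : T ∘ₗ T + lam • T = 0 := this
    rw [neg_smul]
    exact eq_neg_of_add_eq_zero_left h3
  tfae_have 3 → 1 := by
    intro h3 P
    rw [hred P]
    have : T ∘ₗ T + lam • T = 0 := by rw [h3, neg_smul]; simp
    rw [this]
    have hz : TensorProduct.map (LinearMap.id : C →ₗ[k] C) (0 : M →ₗ[k] M) = 0 := by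
      ext c m
      simp
    rw [hz, LinearMap.zero_comp]
  tfae_finish
end

section
/- Let C be a coalgebra over a field k, M a left C-comodule with coaction ρ, λ ∈ k with λ ≠ 0, and P : C → C, T : M → M linear maps. Then (M,P,T) is a Rota-Baxter paired C-comodule of weight λ if and only if there exists a linear map f : M → C⊗M such that (P⊗T)∘ρ = f∘T and (P̄⊗T̄)∘ρ = -f∘T̄, where P̄ = -P - λ·id_C and T̄ = -T - λ·id_M. -/
open TensorProduct

lemma map_bar_expand {k C M : Type*} [Field k] [AddCommGroup C] [Module k C]
    [AddCommGroup M] [Module k M] (P : C →ₗ[k] C) (T : M →ₗ[k] M) (lam : k) :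
    TensorProduct.map (-P - lam • LinearMap.id) (-T - lam • LinearMap.id) =
      TensorProduct.map P T + lam • TensorProduct.map P LinearMap.id +
        lam • TensorProduct.map LinearMap.id T + (lam * lam) • LinearMap.id := by
  apply TensorProduct.ext'
  intro c m
  simp only [TensorProduct.map_tmul, LinearMap.add_apply, LinearMap.smul_apply,
    LinearMap.sub_apply, LinearMap.neg_apply, LinearMap.id_apply,
    TensorProduct.sub_tmul, TensorProduct.tmul_sub, TensorProduct.neg_tmul,
    TensorProduct.tmul_neg, neg_neg, neg_sub, ← TensorProduct.smul_tmul',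
    TensorProduct.tmul_smul, smul_smul]
  module

theorem stmt2 {k C M : Type*} [Field k] [AddCommGroup C] [Module k C] [Coalgebra k C]
    [AddCommGroup M] [Module k M] (ρ : M →ₗ[k] C ⊗[k] M)
    -- `M` is a left `C`-comodule:
    (hcoassoc : (TensorProduct.assoc k C C M).toLinearMap ∘ₗ
        TensorProduct.map Coalgebra.comul LinearMap.id ∘ₗ ρ =
        TensorProduct.map LinearMap.id ρ ∘ₗ ρ)
    (hcounit : (TensorProduct.lid k M).toLinearMap ∘ₗ
        TensorProduct.map Coalgebra.counit LinearMap.id ∘ₗ ρ = LinearMap.id)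
    (lam : k) (hlam : lam ≠ 0) (P : C →ₗ[k] C) (T : M →ₗ[k] M)
    (Pbar : C →ₗ[k] C) (hPbar : Pbar = -P - lam • LinearMap.id)
    (Tbar : M →ₗ[k] M) (hTbar : Tbar = -T - lam • LinearMap.id) :
    RBPairedComodule ρ P T lam ↔
      ∃ f : M →ₗ[k] C ⊗[k] M,
        TensorProduct.map P T ∘ₗ ρ = f ∘ₗ T ∧
        TensorProduct.map Pbar Tbar ∘ₗ ρ = -(f ∘ₗ Tbar) := by
  subst hPbar hTbar
  set g : M →ₗ[k] C ⊗[k] M :=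
    TensorProduct.map P LinearMap.id ∘ₗ ρ + TensorProduct.map LinearMap.id T ∘ₗ ρ + lam • ρ
    with hg
  have hbar : TensorProduct.map (-P - lam • LinearMap.id) (-T - lam • LinearMap.id) ∘ₗ ρ =
      TensorProduct.map P T ∘ₗ ρ + lam • g := by
    rw [map_bar_expand]
    simp only [hg, LinearMap.add_comp, LinearMap.smul_comp, LinearMap.id_comp,
      smul_add, smul_smul]
    abel
  have hgT : ∀ f : M →ₗ[k] C ⊗[k] M,
      f ∘ₗ (-T - lam • LinearMap.id) = -(f ∘ₗ T) - lam • f := by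
    intro f
    ext m
    simp [map_smul]
  constructor
  · intro h
    refine ⟨g, ?_, ?_⟩
    · rw [h]
      simp only [hg, LinearMap.add_comp, LinearMap.smul_comp]
      rfl
    · have hT : TensorProduct.map P T ∘ₗ ρ = g ∘ₗ T := by
        rw [h]
        simp only [hg, LinearMap.add_comp, LinearMap.smul_comp]
        rfl
      rw [hbar, hT, hgT g]
      abel
  · rintro ⟨f, h1, h2⟩
    have hfg : f = g := by
      have := h2
      rw [hbar, hgT f, h1] at this
      have h4 : lam • g = lam • f := by
        have h6 : f ∘ₗ T + lam • g = f ∘ₗ T + lam • f := by rw [this]; abel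
        exact add_left_cancel h6
      exact (smul_right_injective (M →ₗ[k] C ⊗[k] M) hlam h4).symm
    unfold RBPairedComodule
    rw [h1, hfg]
    simp only [hg, LinearMap.add_comp, LinearMap.smul_comp]
    rw [LinearMap.comp_assoc, LinearMap.comp_assoc]
end

section
/- Let (M,P,T) be a Rota-Baxter paired left C-comodule of weight λ with coaction ρ, and set P̄ = -P - λ·id_C and T̄ = -T - λ·id_M. Then for all m ∈ M (writing ρ(m) = m₍₋₁₎ ⊗ m₍₀₎): (i) P(m₍₋₁₎) ⊗ T̄(m₍₀₎) = T(m)₍₋₁₎ ⊗ T̄(T(m)₍₀₎) + P(T̄(m)₍₋₁₎) ⊗ T̄(m)₍₀₎, and (ii) P̄(m₍₋₁₎) ⊗ T(m₍₀₎) = P̄(T(m)₍₋₁₎) ⊗ T(m)₍₀₎ + T̄(m)₍₋₁₎ ⊗ T(T̄(m)₍₀₎). -/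
/-! Substituting `P̄ = -P - λ • id` and `T̄ = -T - λ • id` and expanding bilinearly, each identity
becomes the Rota-Baxter condition at `m`, rearranged. -/

open TensorProduct

section

variable {R C M : Type*} [CommRing R] [AddCommGroup C] [Module R C] [AddCommGroup M] [Module R M]

theorem TensorProduct.map_neg_sub_smul_id_left (P : C →ₗ[R] C) (T : M →ₗ[R] M) (r : R) :
    map (-P - r • LinearMap.id) T = -map P T - r • map LinearMap.id T := by
  simp only [← mapBilinear_apply, map_sub, map_neg, map_smul, LinearMap.sub_apply,
    LinearMap.neg_apply, LinearMap.smul_apply]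

theorem TensorProduct.map_neg_sub_smul_id_right (P : C →ₗ[R] C) (T : M →ₗ[R] M) (r : R) :
    map P (-T - r • LinearMap.id) = -map P T - r • map P LinearMap.id := by
  simp only [← mapBilinear_apply, map_sub, map_neg, map_smul]

end

namespace RBPairedComodule

variable {k C M : Type*} [Field k] [AddCommGroup C] [Module k C] [AddCommGroup M] [Module k M]
variable {ρ : M →ₗ[k] C ⊗[k] M} {P : C →ₗ[k] C} {T : M →ₗ[k] M} {lam : k}

theorem map_apply (hRB : RBPairedComodule ρ P T lam) (m : M) :
    map P T (ρ m) =
      map P LinearMap.id (ρ (T m)) + map LinearMap.id T (ρ (T m)) + lam • ρ (T m) :=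
  LinearMap.congr_fun hRB m

theorem map_neg_sub_smul_id_right_apply (hRB : RBPairedComodule ρ P T lam) (m : M) :
    map P (-T - lam • LinearMap.id) (ρ m) =
      map LinearMap.id (-T - lam • LinearMap.id) (ρ (T m)) +
        map P LinearMap.id (ρ ((-T - lam • LinearMap.id : M →ₗ[k] M) m)) := by
  simp only [map_neg_sub_smul_id_right, map_id, LinearMap.sub_apply, LinearMap.neg_apply,
    LinearMap.smul_apply, LinearMap.id_apply, map_sub, map_neg, map_smul, hRB.map_apply]
  module

theorem map_neg_sub_smul_id_left_apply (hRB : RBPairedComodule ρ P T lam) (m : M) :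
    map (-P - lam • LinearMap.id) T (ρ m) =
      map (-P - lam • LinearMap.id) LinearMap.id (ρ (T m)) +
        map LinearMap.id T (ρ ((-T - lam • LinearMap.id : M →ₗ[k] M) m)) := by
  simp only [map_neg_sub_smul_id_left, map_id, LinearMap.sub_apply, LinearMap.neg_apply,
    LinearMap.smul_apply, LinearMap.id_apply, map_sub, map_neg, map_smul, hRB.map_apply]
  module

end RBPairedComodule

theorem stmt3_general {k C M : Type*} [Field k] [AddCommGroup C] [Module k C]
    [AddCommGroup M] [Module k M] (ρ : M →ₗ[k] C ⊗[k] M)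
    (lam : k) (P : C →ₗ[k] C) (T : M →ₗ[k] M)
    (hRB : RBPairedComodule ρ P T lam)
    (Pbar : C →ₗ[k] C) (hPbar : Pbar = -P - lam • LinearMap.id)
    (Tbar : M →ₗ[k] M) (hTbar : Tbar = -T - lam • LinearMap.id) :
    ∀ m : M,
      -- (i) `P(m₋₁) ⊗ T̄(m₀) = T(m)₋₁ ⊗ T̄(T(m)₀) + P(T̄(m)₋₁) ⊗ T̄(m)₀`
      (TensorProduct.map P Tbar (ρ m) =
        TensorProduct.map LinearMap.id Tbar (ρ (T m)) +
          TensorProduct.map P LinearMap.id (ρ (Tbar m))) ∧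
      -- (ii) `P̄(m₋₁) ⊗ T(m₀) = P̄(T(m)₋₁) ⊗ T(m)₀ + T̄(m)₋₁ ⊗ T(T̄(m)₀)`
      (TensorProduct.map Pbar T (ρ m) =
        TensorProduct.map Pbar LinearMap.id (ρ (T m)) +
          TensorProduct.map LinearMap.id T (ρ (Tbar m))) := by
  subst hPbar hTbar
  exact fun m => ⟨hRB.map_neg_sub_smul_id_right_apply m, hRB.map_neg_sub_smul_id_left_apply m⟩

theorem stmt3 {k C M : Type*} [Field k] [AddCommGroup C] [Module k C] [Coalgebra k C]
    [AddCommGroup M] [Module k M] (ρ : M →ₗ[k] C ⊗[k] M)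
    -- `M` is a left `C`-comodule:
    (hcoassoc : (TensorProduct.assoc k C C M).toLinearMap ∘ₗ
        TensorProduct.map Coalgebra.comul LinearMap.id ∘ₗ ρ =
        TensorProduct.map LinearMap.id ρ ∘ₗ ρ)
    (hcounit : (TensorProduct.lid k M).toLinearMap ∘ₗ
        TensorProduct.map Coalgebra.counit LinearMap.id ∘ₗ ρ = LinearMap.id)
    (lam : k) (P : C →ₗ[k] C) (T : M →ₗ[k] M)
    (hRB : RBPairedComodule ρ P T lam)
    (Pbar : C →ₗ[k] C) (hPbar : Pbar = -P - lam • LinearMap.id)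
    (Tbar : M →ₗ[k] M) (hTbar : Tbar = -T - lam • LinearMap.id) :
    ∀ m : M,
      -- (i) `P(m₋₁) ⊗ T̄(m₀) = T(m)₋₁ ⊗ T̄(T(m)₀) + P(T̄(m)₋₁) ⊗ T̄(m)₀`
      (TensorProduct.map P Tbar (ρ m) =
        TensorProduct.map LinearMap.id Tbar (ρ (T m)) +
          TensorProduct.map P LinearMap.id (ρ (Tbar m))) ∧
      -- (ii) `P̄(m₋₁) ⊗ T(m₀) = P̄(T(m)₋₁) ⊗ T(m)₀ + T̄(m)₋₁ ⊗ T(T̄(m)₀)`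
      (TensorProduct.map Pbar T (ρ m) =
        TensorProduct.map Pbar LinearMap.id (ρ (T m)) +
          TensorProduct.map LinearMap.id T (ρ (Tbar m))) :=
  stmt3_general ρ lam P T hRB Pbar hPbar Tbar hTbar
end

section
/- Let (M,P,T) be a Rota-Baxter paired left C-comodule of weight λ with coaction ρ. If T is idempotent (T∘T = T), then (1+λ)·(id⊗T)∘ρ∘T = 0, i.e. (1+λ)·(T(m)₍₋₁₎ ⊗ T(T(m)₍₀₎)) = 0 for all m ∈ M. -/
open TensorProduct

theorem stmt4 {k C M : Type*} [Field k] [AddCommGroup C] [Module k C] [Coalgebra k C]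
    [AddCommGroup M] [Module k M] (ρ : M →ₗ[k] C ⊗[k] M)
    -- `M` is a left `C`-comodule:
    (hcoassoc : (TensorProduct.assoc k C C M).toLinearMap ∘ₗ
        TensorProduct.map Coalgebra.comul LinearMap.id ∘ₗ ρ =
        TensorProduct.map LinearMap.id ρ ∘ₗ ρ)
    (hcounit : (TensorProduct.lid k M).toLinearMap ∘ₗ
        TensorProduct.map Coalgebra.counit LinearMap.id ∘ₗ ρ = LinearMap.id)
    (lam : k) (P : C →ₗ[k] C) (T : M →ₗ[k] M)
    (hRB : RBPairedComodule ρ P T lam)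
    (hT : T ∘ₗ T = T) :
    ∀ m : M,
      (1 + lam) • TensorProduct.map LinearMap.id T (ρ (T m)) = 0 := by
  intro m
  have hTT : T (T m) = T m := congrFun (congrArg DFunLike.coe hT) m
  have hc1 : TensorProduct.map LinearMap.id T ∘ₗ TensorProduct.map P T
      = TensorProduct.map P T := by
    rw [← TensorProduct.map_comp, LinearMap.id_comp, hT]
  have hc2 : TensorProduct.map LinearMap.id T ∘ₗ TensorProduct.map P LinearMap.id
      = TensorProduct.map P T := by
    rw [← TensorProduct.map_comp, LinearMap.id_comp, LinearMap.comp_id]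
  have hc3 : TensorProduct.map (LinearMap.id : C →ₗ[k] C) T ∘ₗ TensorProduct.map LinearMap.id T
      = TensorProduct.map LinearMap.id T := by
    rw [← TensorProduct.map_comp, LinearMap.id_comp, hT]
  have h := congrArg (fun f : M →ₗ[k] C ⊗[k] M =>
    TensorProduct.map LinearMap.id T (f (T m))) hRB
  simp only [LinearMap.comp_apply, LinearMap.add_apply, LinearMap.smul_apply, map_add,
    map_smul, hTT] at h
  have e1 := congrFun (congrArg DFunLike.coe hc1) (ρ (T m))
  have e2 := congrFun (congrArg DFunLike.coe hc2) (ρ (T m))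
  have e3 := congrFun (congrArg DFunLike.coe hc3) (ρ (T m))
  simp only [LinearMap.comp_apply] at e1 e2 e3
  rw [e1, e2, e3] at h
  have : (1 + lam) • TensorProduct.map LinearMap.id T (ρ (T m))
      = TensorProduct.map P T (ρ (T m)) - TensorProduct.map P T (ρ (T m)) := by
    rw [← sub_eq_zero] at h ⊢
    rw [sub_self]
    linear_combination (norm := module) -h
  simpa using this
end

section
/- Let (M,P,T) be a Rota-Baxter paired left C-comodule of weight λ with coaction ρ. If both P and T are idempotent (P∘P = P and T∘T = T), then (1+λ)·(P⊗id)∘ρ∘T = 0, i.e. (1+λ)·(P(T(m)₍₋₁₎) ⊗ T(m)₍₀₎) = 0 for all m ∈ M. -/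
open TensorProduct

theorem stmt5 {k C M : Type*} [Field k] [AddCommGroup C] [Module k C] [Coalgebra k C]
    [AddCommGroup M] [Module k M] (ρ : M →ₗ[k] C ⊗[k] M)
    -- `M` is a left `C`-comodule:
    (hcoassoc : (TensorProduct.assoc k C C M).toLinearMap ∘ₗ
        TensorProduct.map Coalgebra.comul LinearMap.id ∘ₗ ρ =
        TensorProduct.map LinearMap.id ρ ∘ₗ ρ)
    (hcounit : (TensorProduct.lid k M).toLinearMap ∘ₗ
        TensorProduct.map Coalgebra.counit LinearMap.id ∘ₗ ρ = LinearMap.id)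
    (lam : k) (P : C →ₗ[k] C) (T : M →ₗ[k] M)
    (hRB : RBPairedComodule ρ P T lam)
    (hP : P ∘ₗ P = P) (hT : T ∘ₗ T = T) :
    ∀ m : M,
      (1 + lam) • TensorProduct.map P LinearMap.id (ρ (T m)) = 0 := by
  intro m
  have hTT : T (T m) = T m := LinearMap.congr_fun hT m
  have h1 : TensorProduct.map P T (ρ (T m)) =
      TensorProduct.map P LinearMap.id (ρ (T m)) +
        TensorProduct.map LinearMap.id T (ρ (T m)) +
        lam • ρ (T m) := by
    have := LinearMap.congr_fun hRB (T m)
    simpa [hTT] using this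
  have hPP : TensorProduct.map P LinearMap.id ∘ₗ TensorProduct.map P T =
      TensorProduct.map P T := by
    rw [← TensorProduct.map_comp, hP, LinearMap.id_comp]
  have hPid : TensorProduct.map P (LinearMap.id : M →ₗ[k] M) ∘ₗ
      TensorProduct.map P (LinearMap.id : M →ₗ[k] M) =
      TensorProduct.map P (LinearMap.id : M →ₗ[k] M) := by
    ext c n
    have hc : P (P c) = P c := LinearMap.congr_fun hP c
    simp [hc]
  have hPT : TensorProduct.map P LinearMap.id ∘ₗ TensorProduct.map LinearMap.id T =
      TensorProduct.map P T := by
    rw [← TensorProduct.map_comp]; simp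
  have h2 := congrArg (TensorProduct.map P (LinearMap.id : M →ₗ[k] M)) h1
  simp only [map_add, map_smul] at h2
  have e1 : TensorProduct.map P (LinearMap.id : M →ₗ[k] M) (TensorProduct.map P T (ρ (T m))) =
      TensorProduct.map P T (ρ (T m)) := LinearMap.congr_fun hPP (ρ (T m))
  have e2 : TensorProduct.map P (LinearMap.id : M →ₗ[k] M)
        (TensorProduct.map P (LinearMap.id : M →ₗ[k] M) (ρ (T m))) =
      TensorProduct.map P (LinearMap.id : M →ₗ[k] M) (ρ (T m)) :=
    LinearMap.congr_fun hPid (ρ (T m))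
  have e3 : TensorProduct.map P (LinearMap.id : M →ₗ[k] M)
        (TensorProduct.map (LinearMap.id : C →ₗ[k] C) T (ρ (T m))) =
      TensorProduct.map P T (ρ (T m)) := LinearMap.congr_fun hPT (ρ (T m))
  rw [e1, e2, e3] at h2
  have h3 : TensorProduct.map P LinearMap.id (ρ (T m)) +
      lam • TensorProduct.map P LinearMap.id (ρ (T m)) = 0 := by
    have h2' : TensorProduct.map P T (ρ (T m)) = TensorProduct.map P T (ρ (T m)) +
        (TensorProduct.map P (LinearMap.id : M →ₗ[k] M) (ρ (T m)) +
          lam • TensorProduct.map P (LinearMap.id : M →ₗ[k] M) (ρ (T m))) := by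
      conv_lhs => rw [h2]
      abel
    exact left_eq_add.mp h2'
  calc (1 + lam) • TensorProduct.map P LinearMap.id (ρ (T m))
      = TensorProduct.map P LinearMap.id (ρ (T m)) +
        lam • TensorProduct.map P LinearMap.id (ρ (T m)) := by
        rw [add_smul, one_smul]
    _ = 0 := h3
end

section
/- Let C be a coalgebra over a field k, M a left C-comodule with coaction ρ, and χ ∈ C* a linear functional that is idempotent under the convolution product, i.e. χ(c₁)χ(c₂) = χ(c) for all c ∈ C. Define T : M → M by T(m) = χ(m₍₋₁₎)·m₍₀₎ and P : C → C by P(c) = χ(c₁)·c₂. Then (M,P,T) is a Rota-Baxter paired left C-comodule of weight -1. -/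
open TensorProduct

theorem stmt8 {k C M : Type*} [Field k] [AddCommGroup C] [Module k C] [Coalgebra k C]
    [AddCommGroup M] [Module k M] (ρ : M →ₗ[k] C ⊗[k] M)
    -- `M` is a left `C`-comodule:
    (hcoassoc : (TensorProduct.assoc k C C M).toLinearMap ∘ₗ
        TensorProduct.map Coalgebra.comul LinearMap.id ∘ₗ ρ =
        TensorProduct.map LinearMap.id ρ ∘ₗ ρ)
    (hcounit : (TensorProduct.lid k M).toLinearMap ∘ₗ
        TensorProduct.map Coalgebra.counit LinearMap.id ∘ₗ ρ = LinearMap.id)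
    -- `χ ∈ C*` is idempotent under convolution: `χ(c₁)χ(c₂) = χ(c)` for all `c`
    (χ : C →ₗ[k] k)
    (hχ : (TensorProduct.lid k k).toLinearMap ∘ₗ
        TensorProduct.map χ χ ∘ₗ Coalgebra.comul = χ)
    -- `P(c) = χ(c₁)·c₂` and `T(m) = χ(m₋₁)·m₀`
    (P : C →ₗ[k] C)
    (hP : P = (TensorProduct.lid k C).toLinearMap ∘ₗ
        TensorProduct.map χ LinearMap.id ∘ₗ Coalgebra.comul)
    (T : M →ₗ[k] M)
    (hT : T = (TensorProduct.lid k M).toLinearMap ∘ₗ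
        TensorProduct.map χ LinearMap.id ∘ₗ ρ) :
    RBPairedComodule ρ P T (-1) := by
  classical
  set G : C ⊗[k] (C ⊗[k] M) →ₗ[k] C ⊗[k] M :=
    (TensorProduct.lid k (C ⊗[k] M)).toLinearMap ∘ₗ TensorProduct.map χ LinearMap.id with hG
  -- G after the associator is "apply χ⊗id to the first two factors"
  have hG1 : G ∘ₗ (TensorProduct.assoc k C C M).toLinearMap =
      TensorProduct.map ((TensorProduct.lid k C).toLinearMap ∘ₗ
        TensorProduct.map χ LinearMap.id) LinearMap.id := by
    apply TensorProduct.ext_threefold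
    intro x y z
    simp [hG, TensorProduct.smul_tmul']
  have hG2 : G ∘ₗ TensorProduct.map LinearMap.id ρ =
      ρ ∘ₗ (TensorProduct.lid k M).toLinearMap ∘ₗ TensorProduct.map χ LinearMap.id := by
    apply TensorProduct.ext'
    intro c m
    simp [hG]
  -- key lemma A: (P ⊗ id) ∘ ρ = ρ ∘ T
  have hA : TensorProduct.map P LinearMap.id ∘ₗ ρ = ρ ∘ₗ T := by
    have hmapP : TensorProduct.map P (LinearMap.id : M →ₗ[k] M) =
        TensorProduct.map ((TensorProduct.lid k C).toLinearMap ∘ₗ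
          TensorProduct.map χ LinearMap.id) LinearMap.id ∘ₗ
          TensorProduct.map Coalgebra.comul LinearMap.id := by
      rw [← TensorProduct.map_comp, LinearMap.comp_assoc, ← hP, LinearMap.id_comp]
    calc TensorProduct.map P LinearMap.id ∘ₗ ρ
        = (G ∘ₗ (TensorProduct.assoc k C C M).toLinearMap) ∘ₗ
            TensorProduct.map Coalgebra.comul LinearMap.id ∘ₗ ρ := by
          rw [hG1, hmapP, LinearMap.comp_assoc]
      _ = G ∘ₗ (TensorProduct.assoc k C C M).toLinearMap ∘ₗ
            TensorProduct.map Coalgebra.comul LinearMap.id ∘ₗ ρ := by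
          rw [LinearMap.comp_assoc]
      _ = (G ∘ₗ TensorProduct.map LinearMap.id ρ) ∘ₗ ρ := by
          rw [hcoassoc]; simp only [hG, LinearMap.comp_assoc]
      _ = ρ ∘ₗ T := by
          rw [hG2]; simp only [LinearMap.comp_assoc]; rw [← hT]
  -- χ ∘ P = χ (convolution idempotency)
  have hχP : χ ∘ₗ P = χ := by
    have h1 : (χ ∘ₗ (TensorProduct.lid k C).toLinearMap) ∘ₗ
        TensorProduct.map χ (LinearMap.id : C →ₗ[k] C) =
        (TensorProduct.lid k k).toLinearMap ∘ₗ TensorProduct.map χ χ := by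
      apply TensorProduct.ext'
      intro c c'
      simp
    rw [hP, ← LinearMap.comp_assoc, ← LinearMap.comp_assoc, h1,
      LinearMap.comp_assoc, hχ]
  -- χ ⊗ id absorbs P ⊗ id
  have hmm2 : TensorProduct.map χ (LinearMap.id : M →ₗ[k] M) ∘ₗ
      TensorProduct.map P LinearMap.id = TensorProduct.map χ LinearMap.id := by
    rw [← TensorProduct.map_comp, hχP, LinearMap.id_comp]
  -- T is idempotent
  have hTT : T ∘ₗ T = T := by
    nth_rewrite 1 [hT]
    rw [LinearMap.comp_assoc, LinearMap.comp_assoc, ← hA,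
      ← LinearMap.comp_assoc ρ (TensorProduct.map P LinearMap.id)
        (TensorProduct.map χ LinearMap.id), hmm2, ← hT]
  -- final computation
  unfold RBPairedComodule
  have hsplit : TensorProduct.map P T =
      TensorProduct.map (LinearMap.id : C →ₗ[k] C) T ∘ₗ
        TensorProduct.map P (LinearMap.id : M →ₗ[k] M) := by
    rw [← TensorProduct.map_comp, LinearMap.id_comp, LinearMap.comp_id]
  have h1 : TensorProduct.map P LinearMap.id ∘ₗ ρ ∘ₗ T = ρ ∘ₗ T := by
    rw [← LinearMap.comp_assoc, hA, LinearMap.comp_assoc, hTT]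
  have h2 : TensorProduct.map P T ∘ₗ ρ =
      TensorProduct.map LinearMap.id T ∘ₗ ρ ∘ₗ T := by
    rw [hsplit, LinearMap.comp_assoc, hA, ← LinearMap.comp_assoc,
      LinearMap.comp_assoc]
  rw [h1, h2]
  module
end

section
/- Let H be a cosemisimple bialgebra over a field k, i.e. there exists a left cointegral λ ∈ H* (meaning f*λ = f(1_H)·λ for all f ∈ H*, where * is the convolution product) with λ(1_H) = 1. Let M be a left H-comodule with coaction ρ. Define T : M → M by T(m) = λ(m₍₋₁₎)·m₍₀₎ and P : H → H by P(h) = λ(h₁)·h₂. Then (M,P,T) is a Rota-Baxter paired left H-comodule of weight -1; in particular, (H,P) is a Rota-Baxter coalgebra of weight -1. -/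
open TensorProduct

/-- The Rota-Baxter coalgebra condition of weight `lam` for `(C, Δ, P)`. -/
def RBCoalgebra {k C : Type*} [Field k] [AddCommGroup C] [Module k C]
    (Δ : C →ₗ[k] C ⊗[k] C) (P : C →ₗ[k] C) (lam : k) : Prop :=
  TensorProduct.map P P ∘ₗ Δ =
    TensorProduct.map P LinearMap.id ∘ₗ Δ ∘ₗ P +
      TensorProduct.map LinearMap.id P ∘ₗ Δ ∘ₗ P + lam • (Δ ∘ₗ P)

-- L1: ρ ∘ T = (P ⊗ id) ∘ ρ
lemma auxL1 {k H M : Type*} [Field k] [Ring H] [Bialgebra k H]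
    [AddCommGroup M] [Module k M] (Λ : H →ₗ[k] k)
    (ρ : M →ₗ[k] H ⊗[k] M)
    (hcoassoc : (TensorProduct.assoc k H H M).toLinearMap ∘ₗ
        TensorProduct.map Coalgebra.comul LinearMap.id ∘ₗ ρ =
        TensorProduct.map LinearMap.id ρ ∘ₗ ρ)
    (T : M →ₗ[k] M)
    (hT : T = (TensorProduct.lid k M).toLinearMap ∘ₗ
        TensorProduct.map Λ LinearMap.id ∘ₗ ρ)
    (P : H →ₗ[k] H)
    (hP : P = (TensorProduct.lid k H).toLinearMap ∘ₗ
        TensorProduct.map Λ LinearMap.id ∘ₗ Coalgebra.comul) :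
    ρ ∘ₗ T = TensorProduct.map P LinearMap.id ∘ₗ ρ := by
  have S1 : ρ ∘ₗ (TensorProduct.lid k M).toLinearMap ∘ₗ TensorProduct.map Λ LinearMap.id
      = (TensorProduct.lid k (H ⊗[k] M)).toLinearMap ∘ₗ TensorProduct.map Λ ρ := by
    apply TensorProduct.ext'
    intro h m
    simp
  have S2 : (TensorProduct.lid k (H ⊗[k] M)).toLinearMap ∘ₗ
        TensorProduct.map Λ (LinearMap.id : H ⊗[k] M →ₗ[k] H ⊗[k] M) ∘ₗ
        (TensorProduct.assoc k H H M).toLinearMap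
      = TensorProduct.map ((TensorProduct.lid k H).toLinearMap ∘ₗ
          TensorProduct.map Λ LinearMap.id) LinearMap.id := by
    apply TensorProduct.ext_threefold
    intro x y z
    simp [TensorProduct.smul_tmul']
  calc ρ ∘ₗ T = (ρ ∘ₗ (TensorProduct.lid k M).toLinearMap ∘ₗ TensorProduct.map Λ LinearMap.id) ∘ₗ ρ := by
        rw [hT]; rfl
    _ = (TensorProduct.lid k (H ⊗[k] M)).toLinearMap ∘ₗ TensorProduct.map Λ ρ ∘ₗ ρ := by
        rw [S1]; rfl
    _ = (TensorProduct.lid k (H ⊗[k] M)).toLinearMap ∘ₗ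
        TensorProduct.map Λ LinearMap.id ∘ₗ (TensorProduct.map LinearMap.id ρ ∘ₗ ρ) := by
        have : TensorProduct.map Λ ρ = TensorProduct.map Λ (LinearMap.id : H ⊗[k] M →ₗ[k] _) ∘ₗ
            TensorProduct.map (LinearMap.id : H →ₗ[k] H) ρ := by
          rw [← TensorProduct.map_comp]; simp
        rw [this]; rfl
    _ = ((TensorProduct.lid k (H ⊗[k] M)).toLinearMap ∘ₗ
        TensorProduct.map Λ LinearMap.id ∘ₗ (TensorProduct.assoc k H H M).toLinearMap) ∘ₗ
        TensorProduct.map Coalgebra.comul LinearMap.id ∘ₗ ρ := by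
        rw [← hcoassoc]; rfl
    _ = TensorProduct.map P LinearMap.id ∘ₗ ρ := by
        rw [← LinearMap.comp_assoc, S2, ← TensorProduct.map_comp]
        simp [hP, LinearMap.comp_assoc]

lemma auxRB {k H M : Type*} [Field k] [Ring H] [Bialgebra k H]
    [AddCommGroup M] [Module k M] (Λ : H →ₗ[k] k)
    (hΛ : ∀ f : H →ₗ[k] k,
      (TensorProduct.lid k k).toLinearMap ∘ₗ TensorProduct.map f Λ ∘ₗ Coalgebra.comul =
        f 1 • Λ)
    (hΛ1 : Λ 1 = 1)
    (ρ : M →ₗ[k] H ⊗[k] M)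
    (hcoassoc : (TensorProduct.assoc k H H M).toLinearMap ∘ₗ
        TensorProduct.map Coalgebra.comul LinearMap.id ∘ₗ ρ =
        TensorProduct.map LinearMap.id ρ ∘ₗ ρ)
    (T : M →ₗ[k] M)
    (hT : T = (TensorProduct.lid k M).toLinearMap ∘ₗ
        TensorProduct.map Λ LinearMap.id ∘ₗ ρ)
    (P : H →ₗ[k] H)
    (hP : P = (TensorProduct.lid k H).toLinearMap ∘ₗ
        TensorProduct.map Λ LinearMap.id ∘ₗ Coalgebra.comul) :
    RBPairedComodule ρ P T (-1) := by
  -- coassociativity of comul in `map` form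
  have hcoH : (TensorProduct.assoc k H H H).toLinearMap ∘ₗ
      TensorProduct.map Coalgebra.comul LinearMap.id ∘ₗ Coalgebra.comul =
      TensorProduct.map LinearMap.id Coalgebra.comul ∘ₗ (Coalgebra.comul : H →ₗ[k] H ⊗[k] H) := by
    have := Coalgebra.coassoc (R := k) (A := H)
    simpa [LinearMap.rTensor, LinearMap.lTensor] using this
  have L1 : ρ ∘ₗ T = TensorProduct.map P LinearMap.id ∘ₗ ρ :=
    auxL1 Λ ρ hcoassoc T hT P hP
  have L1H : Coalgebra.comul ∘ₗ P =
      TensorProduct.map P LinearMap.id ∘ₗ (Coalgebra.comul : H →ₗ[k] H ⊗[k] H) :=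
    auxL1 Λ Coalgebra.comul hcoH P hP P hP
  -- Λ ∘ P = Λ
  have K2 : Λ ∘ₗ P = Λ := by
    have e : Λ ∘ₗ (TensorProduct.lid k H).toLinearMap ∘ₗ TensorProduct.map Λ LinearMap.id
        = (TensorProduct.lid k k).toLinearMap ∘ₗ TensorProduct.map Λ Λ := by
      apply TensorProduct.ext'
      intro h h'
      simp
    calc Λ ∘ₗ P = (Λ ∘ₗ (TensorProduct.lid k H).toLinearMap ∘ₗ
          TensorProduct.map Λ LinearMap.id) ∘ₗ Coalgebra.comul := by rw [hP]; rfl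
      _ = (TensorProduct.lid k k).toLinearMap ∘ₗ TensorProduct.map Λ Λ ∘ₗ Coalgebra.comul := by
          rw [e]; rfl
      _ = Λ := by rw [hΛ Λ, hΛ1, one_smul]
  -- P ∘ P = P
  have PP : P ∘ₗ P = P := by
    calc P ∘ₗ P = ((TensorProduct.lid k H).toLinearMap ∘ₗ
          TensorProduct.map Λ LinearMap.id) ∘ₗ (Coalgebra.comul ∘ₗ P) := by
          rw [hP]; rfl
      _ = (TensorProduct.lid k H).toLinearMap ∘ₗ
          (TensorProduct.map Λ LinearMap.id ∘ₗ TensorProduct.map P LinearMap.id) ∘ₗ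
          Coalgebra.comul := by rw [L1H]; rfl
      _ = (TensorProduct.lid k H).toLinearMap ∘ₗ
          TensorProduct.map (Λ ∘ₗ P) LinearMap.id ∘ₗ Coalgebra.comul := by
          rw [← TensorProduct.map_comp]; simp
      _ = P := by rw [K2, hP]
  unfold RBPairedComodule
  rw [L1, ← LinearMap.comp_assoc, ← LinearMap.comp_assoc, ← TensorProduct.map_comp,
    ← TensorProduct.map_comp, PP]
  simp only [LinearMap.comp_id, LinearMap.id_comp, neg_one_smul]
  module

theorem stmt9 {k H M : Type*} [Field k] [Ring H] [Bialgebra k H]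
    [AddCommGroup M] [Module k M]
    -- `Λ` is a left cointegral of `H*`: `f * Λ = f(1_H) • Λ` for all `f ∈ H*`,
    -- and `H` is cosemisimple: `Λ(1_H) = 1`.
    (Λ : H →ₗ[k] k)
    (hΛ : ∀ f : H →ₗ[k] k,
      (TensorProduct.lid k k).toLinearMap ∘ₗ TensorProduct.map f Λ ∘ₗ Coalgebra.comul =
        f 1 • Λ)
    (hΛ1 : Λ 1 = 1)
    -- `M` is a left `H`-comodule:
    (ρ : M →ₗ[k] H ⊗[k] M)
    (hcoassoc : (TensorProduct.assoc k H H M).toLinearMap ∘ₗ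
        TensorProduct.map Coalgebra.comul LinearMap.id ∘ₗ ρ =
        TensorProduct.map LinearMap.id ρ ∘ₗ ρ)
    (hcounit : (TensorProduct.lid k M).toLinearMap ∘ₗ
        TensorProduct.map Coalgebra.counit LinearMap.id ∘ₗ ρ = LinearMap.id)
    -- `T(m) = Λ(m₋₁)·m₀` and `P(h) = Λ(h₁)·h₂`
    (T : M →ₗ[k] M)
    (hT : T = (TensorProduct.lid k M).toLinearMap ∘ₗ
        TensorProduct.map Λ LinearMap.id ∘ₗ ρ)
    (P : H →ₗ[k] H)
    (hP : P = (TensorProduct.lid k H).toLinearMap ∘ₗ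
        TensorProduct.map Λ LinearMap.id ∘ₗ Coalgebra.comul) :
    RBPairedComodule ρ P T (-1) ∧
      RBCoalgebra (Coalgebra.comul : H →ₗ[k] H ⊗[k] H) P (-1) := by
  refine ⟨auxRB Λ hΛ hΛ1 ρ hcoassoc T hT P hP, ?_⟩
  have hcoH : (TensorProduct.assoc k H H H).toLinearMap ∘ₗ
      TensorProduct.map Coalgebra.comul LinearMap.id ∘ₗ Coalgebra.comul =
      TensorProduct.map LinearMap.id Coalgebra.comul ∘ₗ (Coalgebra.comul : H →ₗ[k] H ⊗[k] H) := by
    simpa [LinearMap.rTensor, LinearMap.lTensor] using Coalgebra.coassoc (R := k) (A := H)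
  exact auxRB Λ hΛ hΛ1 Coalgebra.comul hcoH P hP P hP
end

section
/- Let H be a bialgebra over a field k with an idempotent element e ∈ H (e·e = e), and let M be a left-right H-dimodule, i.e. M is a left H-module and a right H-comodule with coaction ρ : M → M⊗H such that ρ(h·m) = h·m₍₀₎ ⊗ m₍₁₎ for all h ∈ H, m ∈ M. Define T : M → M by T(m) = e·m. Then (M,T) is a generic Rota-Baxter paired right H-comodule of weight -1, i.e. for every linear map P : H → H one has (T⊗P)∘ρ = (id⊗P)∘ρ∘T + (T⊗id)∘ρ∘T - ρ∘T. -/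
open TensorProduct

theorem stmt10 {k H M : Type*} [Field k] [Ring H] [Bialgebra k H]
    [AddCommGroup M] [Module k M]
    -- `M` is a left `H`-module via `act`:
    (act : H →ₗ[k] M →ₗ[k] M)
    (hact1 : act 1 = LinearMap.id)
    (hactmul : ∀ g h : H, act (g * h) = act g ∘ₗ act h)
    -- `M` is a right `H`-comodule:
    (ρ : M →ₗ[k] M ⊗[k] H)
    (hcoassoc : (TensorProduct.assoc k M H H).toLinearMap ∘ₗ
        TensorProduct.map ρ LinearMap.id ∘ₗ ρ =
        TensorProduct.map LinearMap.id Coalgebra.comul ∘ₗ ρ)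
    (hcounit : (TensorProduct.rid k M).toLinearMap ∘ₗ
        TensorProduct.map LinearMap.id Coalgebra.counit ∘ₗ ρ = LinearMap.id)
    -- `M` is a left-right `H`-dimodule: `ρ(h·m) = h·m₀ ⊗ m₁`
    (hdi : ∀ h : H, ρ ∘ₗ act h = TensorProduct.map (act h) LinearMap.id ∘ₗ ρ)
    -- `e` is an idempotent element of `H` and `T(m) = e·m`
    (e : H) (he : e * e = e)
    (T : M →ₗ[k] M) (hT : T = act e) :
    -- `(M,T)` is a generic Rota-Baxter paired right `H`-comodule of weight `-1`
    ∀ P : H →ₗ[k] H,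
      TensorProduct.map T P ∘ₗ ρ =
        TensorProduct.map LinearMap.id P ∘ₗ ρ ∘ₗ T +
          TensorProduct.map T LinearMap.id ∘ₗ ρ ∘ₗ T + (-1 : k) • (ρ ∘ₗ T) := by
  intro P
  subst hT
  have hTT : act e ∘ₗ act e = act e := by rw [← hactmul, he]
  have h2 : TensorProduct.map (act e) LinearMap.id ∘ₗ (ρ ∘ₗ act e) = ρ ∘ₗ act e := by
    rw [hdi e, ← LinearMap.comp_assoc, ← TensorProduct.map_comp, hTT, LinearMap.id_comp]
  have h3 : TensorProduct.map LinearMap.id P ∘ₗ ρ ∘ₗ act e =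
      TensorProduct.map (act e) P ∘ₗ ρ := by
    rw [hdi e, ← LinearMap.comp_assoc, ← TensorProduct.map_comp, LinearMap.comp_id,
      LinearMap.id_comp]
  rw [h2, h3]
  module
end

section
/- Let H be a Hopf algebra over a field k with antipode S, C a right H-module coalgebra, M a relative [C,H]-Hopf module, and φ : C → H a right H-module coalgebra map (where H acts on itself by multiplication). Define E_C : C → C by E_C(c) = c₁·Sφ(c₂) and E_M : M → M by E_M(m) = m₍₀₎·Sφ(m₍₁₎). Then (M, E_C, E_M) is a Rota-Baxter paired right C-comodule of weight -1, i.e. (E_M⊗E_C)∘ρ = (id⊗E_C)∘ρ∘E_M + (E_M⊗id)∘ρ∘E_M - ρ∘E_M. -/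
/-!
Write `σ = S ∘ φ` and let `H` act diagonally on `M ⊗ C`, `(x ⊗ a)·h = x·h₁ ⊗ a·h₂`, so that the
relative Hopf condition reads `ρ(m·h) = ρ(m)·h`. Since `φ` is `H`-linear and `S` is
anti-multiplicative, `E_M(m·h) = ε(h) E_M(m)`, and likewise `E_C(c·h) = ε(h) E_C(c)` because `C`
is itself a relative Hopf module. Since `φ` is a coalgebra map, `Δ(σ c) = σ c₂ ⊗ σ c₁` and
`ε ∘ σ = ε`. With coassociativity this gives `ρ(E_M m) = m₀·σ(m₃) ⊗ m₁·σ(m₂)`, hence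
`(E_M ⊗ id) ρ E_M = (E_M ⊗ E_C) ρ` and `(id ⊗ E_C) ρ E_M = ρ E_M`; the Rota–Baxter identity of
weight `-1` is the sum of these two.
-/

open TensorProduct Coalgebra HopfAlgebra WithConv LinearMap

namespace HopfAlgebra

variable {k H : Type*} [CommSemiring k] [Semiring H] [HopfAlgebra k H]

lemma sum_antipode_tmul_mul_comul {ι : Type*} (y : H) {z : H} (r : Repr k z ι) :
    ∑ i ∈ r.index, (antipode k (r.left i) ⊗ₜ[k] y) * comul (r.right i) = 1 ⊗ₜ[k] (y * z) := by
  let r₁ i := ℛ k (r.left i)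
  let r₂ i := ℛ k (r.right i)
  let Φ : H ⊗[k] (H ⊗[k] H) →ₗ[k] H ⊗[k] H :=
    map (mul' k H ∘ₗ rTensor H (antipode k)) (mulLeft k y) ∘ₗ
      (TensorProduct.assoc k H H H).symm.toLinearMap
  have hΦ u v w : Φ (u ⊗ₜ (v ⊗ₜ w)) = (antipode k u * v) ⊗ₜ (y * w) := by simp [Φ]
  have hcoassoc := congr(Φ $(sum_tmul_tmul_eq r r₁ r₂))
  simp only [map_sum, hΦ, ← TensorProduct.sum_tmul, sum_antipode_mul_eq_smul] at hcoassoc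
  calc _ = ∑ i ∈ r.index, ∑ j ∈ (r₂ i).index,
        (antipode k (r.left i) * (r₂ i).left j) ⊗ₜ[k] (y * (r₂ i).right j) := by
          simp [← (r₂ _).eq, Finset.mul_sum]
    _ = _ := by
          simp_rw [← hcoassoc, TensorProduct.smul_tmul, ← mul_smul_comm, ← TensorProduct.tmul_sum,
            ← Finset.mul_sum, sum_counit_smul]

/-- Both sides are convolution inverses of `comul`. -/
lemma comul_comp_antipode :
    comul ∘ₗ antipode k =
      map (antipode k) (antipode k) ∘ₗ (TensorProduct.comm k H H).toLinearMap ∘ₗ comul := by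
  have hleft : toConv (map (antipode k) (antipode k) ∘ₗ (TensorProduct.comm k H H).toLinearMap ∘ₗ
      comul) * toConv (comul (R := k) (A := H)) = 1 := by
    ext a
    let r := ℛ k a
    let r₁ i := ℛ k (r.left i)
    let r₂ i := ℛ k (r.right i)
    let Θ : H ⊗[k] (H ⊗[k] H) →ₗ[k] H ⊗[k] H :=
      lift (mul k (H ⊗[k] H)) ∘ₗ
        map (map (antipode k) (antipode k) ∘ₗ (TensorProduct.comm k H H).toLinearMap) comul ∘ₗ
          (TensorProduct.assoc k H H H).symm.toLinearMap
    have hΘ u v w : Θ (u ⊗ₜ (v ⊗ₜ w)) = (antipode k v ⊗ₜ antipode k u) * comul w := by simp [Θ]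
    have hcoassoc := congr(Θ $(sum_tmul_tmul_eq r r₁ r₂))
    simp only [map_sum, hΘ, sum_antipode_tmul_mul_comul] at hcoassoc
    rw [r.convMul_apply]
    simp only [coe_comp, LinearEquiv.coe_coe, Function.comp_apply, ← (r₁ _).eq, map_sum,
      comm_tmul, map_tmul, Finset.sum_mul, convOne_apply, Algebra.TensorProduct.algebraMap_apply]
    rw [hcoassoc, ← TensorProduct.tmul_sum, sum_antipode_mul_eq_algebraMap_counit,
      Algebra.algebraMap_eq_smul_one, TensorProduct.tmul_smul, TensorProduct.smul_tmul']
  exact congr(($(left_inv_eq_right_inv hleft LinearMap.comul_right_inv)).ofConv).symm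

end HopfAlgebra

namespace RelativeHopfModule

section DiagonalAction

variable {k H C M : Type*} [CommSemiring k] [AddCommMonoid H] [Module k H] [CoalgebraStruct k H]
  [AddCommMonoid C] [Module k C] [AddCommMonoid M] [Module k M]

def diagAct (actM : M ⊗[k] H →ₗ[k] M) (actC : C ⊗[k] H →ₗ[k] C) :
    (M ⊗[k] C) ⊗[k] H →ₗ[k] M ⊗[k] C :=
  map actM actC ∘ₗ (tensorTensorTensorComm k M C H H).toLinearMap ∘ₗ lTensor (M ⊗[k] C) comul

lemma diagAct_tmul {ι : Type*} (actM : M ⊗[k] H →ₗ[k] M) (actC : C ⊗[k] H →ₗ[k] C) (x : M)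
    (a : C) {h : H} (r : Repr k h ι) :
    diagAct actM actC ((x ⊗ₜ a) ⊗ₜ h) =
      ∑ i ∈ r.index, actM (x ⊗ₜ r.left i) ⊗ₜ actC (a ⊗ₜ r.right i) := by
  simp [diagAct, ← r.eq, tmul_sum]

lemma diagAct_comp_rTensor {N : Type*} [AddCommMonoid N] [Module k N]
    (actM : M ⊗[k] H →ₗ[k] M) (actC : C ⊗[k] H →ₗ[k] C) (ρ : N →ₗ[k] M ⊗[k] C) :
    diagAct actM actC ∘ₗ rTensor H ρ =
      map actM actC ∘ₗ (tensorTensorTensorComm k M C H H).toLinearMap ∘ₗ map ρ comul := by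
  simp only [diagAct, comp_assoc, lTensor_comp_rTensor]

end DiagonalAction

variable {k H C M : Type*} [CommSemiring k] [Semiring H] [HopfAlgebra k H]
  [AddCommMonoid C] [Module k C] [AddCommMonoid M] [Module k M]

def antipodeTwist (act : M ⊗[k] H →ₗ[k] M) (ρ : M →ₗ[k] M ⊗[k] C) (φ : C →ₗ[k] H) :
    M →ₗ[k] M :=
  act ∘ₗ map LinearMap.id (antipode k ∘ₗ φ) ∘ₗ ρ

lemma antipodeTwist_act {act : M ⊗[k] H →ₗ[k] M} {ρ : M →ₗ[k] M ⊗[k] C}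
    {actC : C ⊗[k] H →ₗ[k] C} {φ : C →ₗ[k] H}
    (hmul : ∀ (m : M) (g h : H), act (act (m ⊗ₜ g) ⊗ₜ h) = act (m ⊗ₜ (g * h)))
    (hrel : ρ ∘ₗ act = diagAct act actC ∘ₗ rTensor H ρ)
    (hφ : ∀ (c : C) (h : H), φ (actC (c ⊗ₜ h)) = φ c * h) (m : M) (h : H) :
    antipodeTwist act ρ φ (act (m ⊗ₜ h)) = counit (R := k) h • antipodeTwist act ρ φ m := by
  have hρ := congr($hrel (m ⊗ₜ h))
  simp only [comp_apply, rTensor_tmul] at hρ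
  simp only [antipodeTwist, comp_apply, hρ]
  induction ρ m using TensorProduct.induction_on with
  | zero => simp [diagAct]
  | tmul x c =>
    simp only [diagAct_tmul _ _ _ _ (ℛ k h), map_sum, map_tmul, id_coe, id_eq, coe_comp,
      Function.comp_apply, hφ, antipode_mul_antidistrib, hmul, ← mul_assoc]
    rw [← map_sum, ← tmul_sum, ← Finset.sum_mul, sum_mul_antipode_eq_smul, smul_one_mul,
      tmul_smul, map_smul]
  | add _ _ h₁ h₂ => simp [h₁, h₂, add_tmul]

lemma map_antipodeTwist_id_diagAct {act : M ⊗[k] H →ₗ[k] M} {ρ : M →ₗ[k] M ⊗[k] C}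
    {actC : C ⊗[k] H →ₗ[k] C} {φ : C →ₗ[k] H}
    (hmul : ∀ (m : M) (g h : H), act (act (m ⊗ₜ g) ⊗ₜ h) = act (m ⊗ₜ (g * h)))
    (hrel : ρ ∘ₗ act = diagAct act actC ∘ₗ rTensor H ρ)
    (hφ : ∀ (c : C) (h : H), φ (actC (c ⊗ₜ h)) = φ c * h) (x : M) (a : C) (h : H) :
    map (antipodeTwist act ρ φ) LinearMap.id (diagAct act actC ((x ⊗ₜ a) ⊗ₜ h)) =
      antipodeTwist act ρ φ x ⊗ₜ actC (a ⊗ₜ h) := by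
  simp only [diagAct_tmul _ _ _ _ (ℛ k h), map_sum, map_tmul, antipodeTwist_act hmul hrel hφ,
    id_apply, smul_tmul]
  simp_rw [← tmul_sum, ← map_smul, ← tmul_smul, ← map_sum, ← tmul_sum, sum_counit_smul]

/-- In Sweedler notation, `ρ (E m) = (m₀ ⊗ m₁) · σ(m₂)` for the diagonal action. -/
lemma comp_antipodeTwist {act : M ⊗[k] H →ₗ[k] M} {ρ : M →ₗ[k] M ⊗[k] C}
    {actC : C ⊗[k] H →ₗ[k] C} [CoalgebraStruct k C] (φ : C →ₗ[k] H)
    (hrel : ρ ∘ₗ act = diagAct act actC ∘ₗ rTensor H ρ)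
    (hcoassoc : (TensorProduct.assoc k M C C).toLinearMap ∘ₗ map ρ LinearMap.id ∘ₗ ρ =
      map LinearMap.id comul ∘ₗ ρ) :
    ρ ∘ₗ antipodeTwist act ρ φ =
      diagAct act actC ∘ₗ lTensor (M ⊗[k] C) (antipode k ∘ₗ φ) ∘ₗ
        (TensorProduct.assoc k M C C).symm.toLinearMap ∘ₗ map LinearMap.id comul ∘ₗ ρ := by
  have hshift : rTensor H ρ ∘ₗ map LinearMap.id (antipode k ∘ₗ φ) =
      lTensor (M ⊗[k] C) (antipode k ∘ₗ φ) ∘ₗ map ρ LinearMap.id := by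
    ext; simp
  rw [← hcoassoc, antipodeTwist, ← comp_assoc, hrel]
  simp only [comp_assoc, LinearEquiv.symm_comp_assoc]
  rw [← comp_assoc ρ, hshift, comp_assoc]

variable [Coalgebra k C]

lemma comul_comp_antipode_comp {φ : C →ₗ[k] H} (hφ : comul ∘ₗ φ = map φ φ ∘ₗ comul) :
    comul ∘ₗ antipode k ∘ₗ φ =
      map (antipode k ∘ₗ φ) (antipode k ∘ₗ φ) ∘ₗ (TensorProduct.comm k C C).toLinearMap ∘ₗ
        comul := by
  rw [← comp_assoc, comul_comp_antipode, comp_assoc, comp_assoc, hφ]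
  ext c
  simp [map_comm, map_comp]

lemma antipodeTwist_comul_apply {ι : Type*} (actC : C ⊗[k] H →ₗ[k] C) (φ : C →ₗ[k] H) {c : C}
    (r : Repr k c ι) :
    antipodeTwist actC comul φ c =
      ∑ i ∈ r.index, actC (r.left i ⊗ₜ antipode k (φ (r.right i))) := by
  simp [antipodeTwist, ← r.eq]

lemma diagAct_tmul_antipode {ι : Type*} {act : M ⊗[k] H →ₗ[k] M} {actC : C ⊗[k] H →ₗ[k] C}
    {φ : C →ₗ[k] H} (hφ : comul ∘ₗ φ = map φ φ ∘ₗ comul) (x : M) (a : C) {b : C}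
    (r : Repr k b ι) :
    diagAct act actC ((x ⊗ₜ a) ⊗ₜ antipode k (φ b)) =
      ∑ i ∈ r.index, act (x ⊗ₜ antipode k (φ (r.right i))) ⊗ₜ
        actC (a ⊗ₜ antipode k (φ (r.left i))) := by
  have hcomul := congr($(comul_comp_antipode_comp hφ) b)
  simp only [comp_apply, LinearEquiv.coe_coe] at hcomul
  simp [diagAct, hcomul, ← r.eq, tmul_sum]

lemma map_id_antipodeTwist_diagAct_antipode {act : M ⊗[k] H →ₗ[k] M}
    {actC : C ⊗[k] H →ₗ[k] C} {φ : C →ₗ[k] H}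
    (hmulC : ∀ (c : C) (g h : H), actC (actC (c ⊗ₜ g) ⊗ₜ h) = actC (c ⊗ₜ (g * h)))
    (hrelC : comul ∘ₗ actC = diagAct actC actC ∘ₗ rTensor H comul)
    (hφΔ : comul ∘ₗ φ = map φ φ ∘ₗ comul) (hφε : counit ∘ₗ φ = (counit : C →ₗ[k] k))
    (hφ : ∀ (c : C) (h : H), φ (actC (c ⊗ₜ h)) = φ c * h) (x : M) (a b : C) :
    map LinearMap.id (antipodeTwist actC comul φ)
        (diagAct act actC ((x ⊗ₜ a) ⊗ₜ antipode k (φ b))) =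
      act (x ⊗ₜ antipode k (φ b)) ⊗ₜ antipodeTwist actC comul φ a := by
  have hεφ (c : C) : counit (R := k) (φ c) = counit c := congr($hφε c)
  simp only [diagAct_tmul_antipode hφΔ x a (ℛ k b), map_sum, map_tmul, id_apply,
    antipodeTwist_act hmulC hrelC hφ, counit_antipode, hεφ, tmul_smul, smul_tmul']
  conv_rhs => rw [← sum_counit_smul (ℛ k b)]
  simp only [map_sum, map_smul, tmul_sum, tmul_smul, sum_tmul]

lemma map_antipodeTwist_id_comp_comp_antipodeTwist {act : M ⊗[k] H →ₗ[k] M}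
    {ρ : M →ₗ[k] M ⊗[k] C} {actC : C ⊗[k] H →ₗ[k] C} {φ : C →ₗ[k] H}
    (hmul : ∀ (m : M) (g h : H), act (act (m ⊗ₜ g) ⊗ₜ h) = act (m ⊗ₜ (g * h)))
    (hrel : ρ ∘ₗ act = diagAct act actC ∘ₗ rTensor H ρ)
    (hcoassoc : (TensorProduct.assoc k M C C).toLinearMap ∘ₗ map ρ LinearMap.id ∘ₗ ρ =
      map LinearMap.id comul ∘ₗ ρ)
    (hφ : ∀ (c : C) (h : H), φ (actC (c ⊗ₜ h)) = φ c * h) :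
    map (antipodeTwist act ρ φ) LinearMap.id ∘ₗ ρ ∘ₗ antipodeTwist act ρ φ =
      map (antipodeTwist act ρ φ) (antipodeTwist actC comul φ) ∘ₗ ρ := by
  rw [comp_antipodeTwist φ hrel hcoassoc]
  suffices map (antipodeTwist act ρ φ) LinearMap.id ∘ₗ diagAct act actC ∘ₗ
      lTensor (M ⊗[k] C) (antipode k ∘ₗ φ) ∘ₗ (TensorProduct.assoc k M C C).symm.toLinearMap ∘ₗ
        map LinearMap.id comul = map (antipodeTwist act ρ φ) (antipodeTwist actC comul φ) by
    rw [← this]; simp only [comp_assoc]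
  ext x c
  simp [← (ℛ k c).eq, tmul_sum, map_antipodeTwist_id_diagAct hmul hrel hφ,
    antipodeTwist_comul_apply _ _ (ℛ k c)]

lemma map_id_antipodeTwist_comp_comp_antipodeTwist {act : M ⊗[k] H →ₗ[k] M}
    {ρ : M →ₗ[k] M ⊗[k] C} {actC : C ⊗[k] H →ₗ[k] C} {φ : C →ₗ[k] H}
    (hrel : ρ ∘ₗ act = diagAct act actC ∘ₗ rTensor H ρ)
    (hcoassoc : (TensorProduct.assoc k M C C).toLinearMap ∘ₗ map ρ LinearMap.id ∘ₗ ρ =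
      map LinearMap.id comul ∘ₗ ρ)
    (hmulC : ∀ (c : C) (g h : H), actC (actC (c ⊗ₜ g) ⊗ₜ h) = actC (c ⊗ₜ (g * h)))
    (hrelC : comul ∘ₗ actC = diagAct actC actC ∘ₗ rTensor H comul)
    (hφΔ : comul ∘ₗ φ = map φ φ ∘ₗ comul) (hφε : counit ∘ₗ φ = (counit : C →ₗ[k] k))
    (hφ : ∀ (c : C) (h : H), φ (actC (c ⊗ₜ h)) = φ c * h) :
    map LinearMap.id (antipodeTwist actC comul φ) ∘ₗ ρ ∘ₗ antipodeTwist act ρ φ =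
      ρ ∘ₗ antipodeTwist act ρ φ := by
  rw [comp_antipodeTwist φ hrel hcoassoc]
  suffices map LinearMap.id (antipodeTwist actC comul φ) ∘ₗ diagAct act actC ∘ₗ
      lTensor (M ⊗[k] C) (antipode k ∘ₗ φ) ∘ₗ (TensorProduct.assoc k M C C).symm.toLinearMap ∘ₗ
        map LinearMap.id comul = diagAct act actC ∘ₗ
      lTensor (M ⊗[k] C) (antipode k ∘ₗ φ) ∘ₗ (TensorProduct.assoc k M C C).symm.toLinearMap ∘ₗ
        map LinearMap.id comul by
    simp only [← comp_assoc] at this ⊢; rw [this]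
  refine TensorProduct.ext' fun x c => ?_
  -- coassociativity of `C`: both sides are `∑ x·σ(c₃) ⊗ c₁·σ(c₂)`
  let r := ℛ k c
  let r₁ i := ℛ k (r.left i)
  let r₂ i := ℛ k (r.right i)
  let K : C ⊗[k] (C ⊗[k] C) →ₗ[k] M ⊗[k] C :=
    (TensorProduct.comm k C M).toLinearMap ∘ₗ
      map (actC ∘ₗ lTensor C (antipode k ∘ₗ φ))
        (act ∘ₗ TensorProduct.mk k M H x ∘ₗ antipode k ∘ₗ φ) ∘ₗ
          (TensorProduct.assoc k C C C).symm.toLinearMap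
  have hK u v w : K (u ⊗ₜ (v ⊗ₜ w)) =
      act (x ⊗ₜ antipode k (φ w)) ⊗ₜ actC (u ⊗ₜ antipode k (φ v)) := by simp [K]
  have hcoassocC := congr(K $(sum_tmul_tmul_eq r r₁ r₂))
  simp only [map_sum, hK] at hcoassocC
  simp only [coe_comp, Function.comp_apply, LinearEquiv.coe_coe, map_tmul, id_apply, ← r.eq,
    tmul_sum, map_sum, assoc_symm_tmul, lTensor_tmul]
  simp only [map_id_antipodeTwist_diagAct_antipode hmulC hrelC hφΔ hφε hφ]
  simp only [diagAct_tmul_antipode hφΔ _ _ (r₂ _), antipodeTwist_comul_apply _ _ (r₁ _), tmul_sum]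
  exact hcoassocC

end RelativeHopfModule

open RelativeHopfModule in
theorem stmt11_general {k H C M : Type*} [Field k] [Ring H] [HopfAlgebra k H]
    [AddCommGroup C] [Module k C] [Coalgebra k C]
    [AddCommGroup M] [Module k M]
    -- `C` is a right `H`-module coalgebra, with action `μC : C ⊗ H → C`:
    (μC : C ⊗[k] H →ₗ[k] C)
    (hCmul : ∀ (c : C) (g h : H), μC (μC (c ⊗ₜ[k] g) ⊗ₜ[k] h) = μC (c ⊗ₜ[k] (g * h)))
    -- `Δ(c·h) = c₁·h₁ ⊗ c₂·h₂`:
    (hCΔ : Coalgebra.comul ∘ₗ μC =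
      TensorProduct.map μC μC ∘ₗ (TensorProduct.tensorTensorTensorComm k C C H H).toLinearMap ∘ₗ
        TensorProduct.map Coalgebra.comul Coalgebra.comul)
    -- `M` is a right `C`-comodule:
    (ρ : M →ₗ[k] M ⊗[k] C)
    (hcoassoc : (TensorProduct.assoc k M C C).toLinearMap ∘ₗ
        TensorProduct.map ρ LinearMap.id ∘ₗ ρ =
        TensorProduct.map LinearMap.id Coalgebra.comul ∘ₗ ρ)
    -- `M` is a right `H`-module via `μM : M ⊗ H → M`:
    (μM : M ⊗[k] H →ₗ[k] M)
    (hMmul : ∀ (m : M) (g h : H), μM (μM (m ⊗ₜ[k] g) ⊗ₜ[k] h) = μM (m ⊗ₜ[k] (g * h)))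
    -- `M` is a relative `[C,H]`-Hopf module: `ρ(m·h) = m₀·h₁ ⊗ m₁·h₂`:
    (hrel : ρ ∘ₗ μM =
      TensorProduct.map μM μC ∘ₗ (TensorProduct.tensorTensorTensorComm k M C H H).toLinearMap ∘ₗ
        TensorProduct.map ρ Coalgebra.comul)
    -- `φ : C → H` is a right `H`-module coalgebra map:
    (φ : C →ₗ[k] H)
    (hφΔ : Coalgebra.comul ∘ₗ φ = TensorProduct.map φ φ ∘ₗ Coalgebra.comul)
    (hφε : Coalgebra.counit ∘ₗ φ = (Coalgebra.counit : C →ₗ[k] k))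
    (hφH : ∀ (c : C) (h : H), φ (μC (c ⊗ₜ[k] h)) = φ c * h)
    -- `E_C(c) = c₁ · Sφ(c₂)` and `E_M(m) = m₀ · Sφ(m₁)`:
    (E_C : C →ₗ[k] C)
    (hEC : E_C = μC ∘ₗ
      TensorProduct.map LinearMap.id ((HopfAlgebra.antipode k : H →ₗ[k] H) ∘ₗ φ) ∘ₗ
        Coalgebra.comul)
    (E_M : M →ₗ[k] M)
    (hEM : E_M = μM ∘ₗ
      TensorProduct.map LinearMap.id ((HopfAlgebra.antipode k : H →ₗ[k] H) ∘ₗ φ) ∘ₗ ρ) :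
    -- `(M, E_C, E_M)` is a Rota-Baxter paired right `C`-comodule of weight `-1`:
    TensorProduct.map E_M E_C ∘ₗ ρ =
      TensorProduct.map E_M LinearMap.id ∘ₗ ρ ∘ₗ E_M +
        TensorProduct.map LinearMap.id E_C ∘ₗ ρ ∘ₗ E_M + (-1 : k) • (ρ ∘ₗ E_M) := by
  have hrelM : ρ ∘ₗ μM = diagAct μM μC ∘ₗ rTensor H ρ := by rw [hrel, diagAct_comp_rTensor]
  have hrelC : comul ∘ₗ μC = diagAct μC μC ∘ₗ rTensor H comul := by
    rw [hCΔ, diagAct_comp_rTensor]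
  obtain rfl : E_C = antipodeTwist μC comul φ := hEC
  obtain rfl : E_M = antipodeTwist μM ρ φ := hEM
  rw [map_antipodeTwist_id_comp_comp_antipodeTwist hMmul hrelM hcoassoc hφH,
    map_id_antipodeTwist_comp_comp_antipodeTwist hrelM hcoassoc hCmul hrelC hφΔ hφε hφH]
  ext m
  rw [LinearMap.add_apply, LinearMap.add_apply, LinearMap.smul_apply, neg_one_smul,
    add_neg_cancel_right]

theorem stmt11 {k H C M : Type*} [Field k] [Ring H] [HopfAlgebra k H]
    [AddCommGroup C] [Module k C] [Coalgebra k C]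
    [AddCommGroup M] [Module k M]
    -- `C` is a right `H`-module coalgebra, with action `μC : C ⊗ H → C`:
    (μC : C ⊗[k] H →ₗ[k] C)
    (hC1 : ∀ c : C, μC (c ⊗ₜ[k] 1) = c)
    (hCmul : ∀ (c : C) (g h : H), μC (μC (c ⊗ₜ[k] g) ⊗ₜ[k] h) = μC (c ⊗ₜ[k] (g * h)))
    -- `Δ(c·h) = c₁·h₁ ⊗ c₂·h₂`:
    (hCΔ : Coalgebra.comul ∘ₗ μC =
      TensorProduct.map μC μC ∘ₗ (TensorProduct.tensorTensorTensorComm k C C H H).toLinearMap ∘ₗ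
        TensorProduct.map Coalgebra.comul Coalgebra.comul)
    -- `ε(c·h) = ε(c)ε(h)`:
    (hCε : Coalgebra.counit ∘ₗ μC =
      (TensorProduct.lid k k).toLinearMap ∘ₗ
        TensorProduct.map Coalgebra.counit Coalgebra.counit)
    -- `M` is a right `C`-comodule:
    (ρ : M →ₗ[k] M ⊗[k] C)
    (hcoassoc : (TensorProduct.assoc k M C C).toLinearMap ∘ₗ
        TensorProduct.map ρ LinearMap.id ∘ₗ ρ =
        TensorProduct.map LinearMap.id Coalgebra.comul ∘ₗ ρ)
    (hcounit : (TensorProduct.rid k M).toLinearMap ∘ₗ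
        TensorProduct.map LinearMap.id Coalgebra.counit ∘ₗ ρ = LinearMap.id)
    -- `M` is a right `H`-module via `μM : M ⊗ H → M`:
    (μM : M ⊗[k] H →ₗ[k] M)
    (hM1 : ∀ m : M, μM (m ⊗ₜ[k] 1) = m)
    (hMmul : ∀ (m : M) (g h : H), μM (μM (m ⊗ₜ[k] g) ⊗ₜ[k] h) = μM (m ⊗ₜ[k] (g * h)))
    -- `M` is a relative `[C,H]`-Hopf module: `ρ(m·h) = m₀·h₁ ⊗ m₁·h₂`:
    (hrel : ρ ∘ₗ μM =
      TensorProduct.map μM μC ∘ₗ (TensorProduct.tensorTensorTensorComm k M C H H).toLinearMap ∘ₗ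
        TensorProduct.map ρ Coalgebra.comul)
    -- `φ : C → H` is a right `H`-module coalgebra map:
    (φ : C →ₗ[k] H)
    (hφΔ : Coalgebra.comul ∘ₗ φ = TensorProduct.map φ φ ∘ₗ Coalgebra.comul)
    (hφε : Coalgebra.counit ∘ₗ φ = (Coalgebra.counit : C →ₗ[k] k))
    (hφH : ∀ (c : C) (h : H), φ (μC (c ⊗ₜ[k] h)) = φ c * h)
    -- `E_C(c) = c₁ · Sφ(c₂)` and `E_M(m) = m₀ · Sφ(m₁)`:
    (E_C : C →ₗ[k] C)
    (hEC : E_C = μC ∘ₗ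
      TensorProduct.map LinearMap.id ((HopfAlgebra.antipode k : H →ₗ[k] H) ∘ₗ φ) ∘ₗ
        Coalgebra.comul)
    (E_M : M →ₗ[k] M)
    (hEM : E_M = μM ∘ₗ
      TensorProduct.map LinearMap.id ((HopfAlgebra.antipode k : H →ₗ[k] H) ∘ₗ φ) ∘ₗ ρ) :
    -- `(M, E_C, E_M)` is a Rota-Baxter paired right `C`-comodule of weight `-1`:
    TensorProduct.map E_M E_C ∘ₗ ρ =
      TensorProduct.map E_M LinearMap.id ∘ₗ ρ ∘ₗ E_M +
        TensorProduct.map LinearMap.id E_C ∘ₗ ρ ∘ₗ E_M + (-1 : k) • (ρ ∘ₗ E_M) :=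
  stmt11_general μC hCmul hCΔ ρ hcoassoc μM hMmul hrel φ hφΔ hφε hφH E_C hEC E_M hEM
end

section
/- Let (M,P,T) be a Rota-Baxter paired left C-comodule of weight λ. Define P̄ = -P - λ·id_C and T̄ = -T - λ·id_M. Then (M, P̄, T̄) is also a Rota-Baxter paired left C-comodule of weight λ. -/
open TensorProduct

theorem stmt12 {k C M : Type*} [Field k] [AddCommGroup C] [Module k C] [Coalgebra k C]
    [AddCommGroup M] [Module k M] (ρ : M →ₗ[k] C ⊗[k] M)
    -- `M` is a left `C`-comodule:
    (hcoassoc : (TensorProduct.assoc k C C M).toLinearMap ∘ₗ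
        TensorProduct.map Coalgebra.comul LinearMap.id ∘ₗ ρ =
        TensorProduct.map LinearMap.id ρ ∘ₗ ρ)
    (hcounit : (TensorProduct.lid k M).toLinearMap ∘ₗ
        TensorProduct.map Coalgebra.counit LinearMap.id ∘ₗ ρ = LinearMap.id)
    (lam : k) (P : C →ₗ[k] C) (T : M →ₗ[k] M)
    (hRB : RBPairedComodule ρ P T lam)
    (Pbar : C →ₗ[k] C) (hPbar : Pbar = -P - lam • LinearMap.id)
    (Tbar : M →ₗ[k] M) (hTbar : Tbar = -T - lam • LinearMap.id) :
    RBPairedComodule ρ Pbar Tbar lam := by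
  subst hPbar hTbar
  unfold RBPairedComodule at hRB ⊢
  have e1 : (-P - lam • LinearMap.id : C →ₗ[k] C)
      = (-1 : k) • P + (-lam) • LinearMap.id := by
    rw [neg_smul, neg_smul, one_smul, sub_eq_add_neg]
  have e2 : (-T - lam • LinearMap.id : M →ₗ[k] M)
      = (-1 : k) • T + (-lam) • LinearMap.id := by
    rw [neg_smul, neg_smul, one_smul, sub_eq_add_neg]
  rw [e1, e2]
  simp only [TensorProduct.map_add_left, TensorProduct.map_add_right,
    TensorProduct.map_smul_left, TensorProduct.map_smul_right,
    TensorProduct.map_id, LinearMap.add_comp, LinearMap.comp_add,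
    LinearMap.smul_comp, LinearMap.comp_smul, LinearMap.comp_id,
    LinearMap.id_comp, smul_add, smul_smul]
  rw [hRB]
  module
end

section
/- Let (C,P) be a Rota-Baxter coalgebra of weight λ and (M,P,T) a Rota-Baxter paired left C-comodule of weight λ with coaction ρ. Define Δ′ = (id⊗P)∘Δ + (P⊗id)∘Δ + λ·Δ on C and ρ′ = (P⊗id)∘ρ + (id⊗T)∘ρ + λ·ρ on M. Then: (a) Δ′∘P = (P⊗P)∘Δ and (P⊗P)∘Δ′ = (P⊗id)∘Δ′∘P + (id⊗P)∘Δ′∘P + λ·Δ′∘P (so (C,Δ′,P) is a noncounitary Rota-Baxter coalgebra of weight λ); (b) ρ′∘T = (P⊗T)∘ρ. -/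
open TensorProduct

theorem stmt13 {k C M : Type*} [Field k] [AddCommGroup C] [Module k C] [Coalgebra k C]
    [AddCommGroup M] [Module k M] (ρ : M →ₗ[k] C ⊗[k] M)
    -- `M` is a left `C`-comodule:
    (hcoassoc : (TensorProduct.assoc k C C M).toLinearMap ∘ₗ
        TensorProduct.map Coalgebra.comul LinearMap.id ∘ₗ ρ =
        TensorProduct.map LinearMap.id ρ ∘ₗ ρ)
    (hcounit : (TensorProduct.lid k M).toLinearMap ∘ₗ
        TensorProduct.map Coalgebra.counit LinearMap.id ∘ₗ ρ = LinearMap.id)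
    (lam : k) (P : C →ₗ[k] C) (T : M →ₗ[k] M)
    -- `(C,P)` is a Rota-Baxter coalgebra and `(M,P,T)` a Rota-Baxter paired
    -- `C`-comodule, both of weight `lam`:
    (hRBC : RBCoalgebra (Coalgebra.comul : C →ₗ[k] C ⊗[k] C) P lam)
    (hRB : RBPairedComodule ρ P T lam)
    -- `Δ' = (id⊗P)∘Δ + (P⊗id)∘Δ + lam•Δ` and `ρ' = (P⊗id)∘ρ + (id⊗T)∘ρ + lam•ρ`:
    (Δ' : C →ₗ[k] C ⊗[k] C)
    (hΔ' : Δ' = TensorProduct.map LinearMap.id P ∘ₗ Coalgebra.comul +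
      TensorProduct.map P LinearMap.id ∘ₗ Coalgebra.comul +
        lam • (Coalgebra.comul : C →ₗ[k] C ⊗[k] C))
    (ρ' : M →ₗ[k] C ⊗[k] M)
    (hρ' : ρ' = TensorProduct.map P LinearMap.id ∘ₗ ρ +
      TensorProduct.map LinearMap.id T ∘ₗ ρ + lam • ρ) :
    -- (a) `(C,Δ',P)` is a (noncounitary) Rota-Baxter coalgebra of weight `lam`:
    (Δ' ∘ₗ P = TensorProduct.map P P ∘ₗ Coalgebra.comul ∧ RBCoalgebra Δ' P lam) ∧
    -- (b) `ρ'∘T = (P⊗T)∘ρ`: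
    ρ' ∘ₗ T = TensorProduct.map P T ∘ₗ ρ := by
  unfold RBCoalgebra RBPairedComodule at *
  have ha : Δ' ∘ₗ P = TensorProduct.map P P ∘ₗ Coalgebra.comul := by
    rw [hRBC, hΔ']
    simp only [LinearMap.add_comp, LinearMap.smul_comp, LinearMap.comp_assoc]
    abel
  refine ⟨⟨ha, ?_⟩, ?_⟩
  · rw [show TensorProduct.map P LinearMap.id ∘ₗ Δ' ∘ₗ P +
        TensorProduct.map LinearMap.id P ∘ₗ Δ' ∘ₗ P + lam • (Δ' ∘ₗ P) =
        TensorProduct.map P LinearMap.id ∘ₗ (Δ' ∘ₗ P) +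
        TensorProduct.map LinearMap.id P ∘ₗ (Δ' ∘ₗ P) + lam • (Δ' ∘ₗ P) from rfl,
      ha, hΔ']
    simp only [LinearMap.comp_add, LinearMap.comp_smul, ← LinearMap.comp_assoc,
      ← TensorProduct.map_comp, LinearMap.id_comp, LinearMap.comp_id]
    abel
  · rw [hRB, hρ']
    simp only [LinearMap.add_comp, LinearMap.smul_comp, LinearMap.comp_assoc]
end

section
/- Let (C,P) be a Rota-Baxter coalgebra of weight λ and (M,P,T) a Rota-Baxter paired left C-comodule of weight λ with coaction ρ. Define Δ′ = (id⊗P)∘Δ + (P⊗id)∘Δ + λ·Δ on C and ρ′ = (P⊗id)∘ρ + (id⊗T)∘ρ + λ·ρ on M. Then: (c) (M,ρ′) is a noncounitary comodule over (C,Δ′), i.e. (id⊗ρ′)∘ρ′ = (Δ′⊗id)∘ρ′; and (d) (P⊗T)∘ρ′ = (P⊗id)∘ρ′∘T + (id⊗T)∘ρ′∘T + λ·ρ′∘T, so (M,P,T) is a Rota-Baxter paired comodule of weight λ with respect to the coaction ρ′. -/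
open TensorProduct

theorem stmt14 {k C M : Type*} [Field k] [AddCommGroup C] [Module k C] [Coalgebra k C]
    [AddCommGroup M] [Module k M] (ρ : M →ₗ[k] C ⊗[k] M)
    -- `M` is a left `C`-comodule:
    (hcoassoc : (TensorProduct.assoc k C C M).toLinearMap ∘ₗ
        TensorProduct.map Coalgebra.comul LinearMap.id ∘ₗ ρ =
        TensorProduct.map LinearMap.id ρ ∘ₗ ρ)
    (hcounit : (TensorProduct.lid k M).toLinearMap ∘ₗ
        TensorProduct.map Coalgebra.counit LinearMap.id ∘ₗ ρ = LinearMap.id)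
    (lam : k) (P : C →ₗ[k] C) (T : M →ₗ[k] M)
    -- `(C,P)` is a Rota-Baxter coalgebra and `(M,P,T)` a Rota-Baxter paired
    -- `C`-comodule, both of weight `lam`:
    (hRBC : RBCoalgebra (Coalgebra.comul : C →ₗ[k] C ⊗[k] C) P lam)
    (hRB : RBPairedComodule ρ P T lam)
    -- `Δ' = (id⊗P)∘Δ + (P⊗id)∘Δ + lam•Δ` and `ρ' = (P⊗id)∘ρ + (id⊗T)∘ρ + lam•ρ`:
    (Δ' : C →ₗ[k] C ⊗[k] C)
    (hΔ' : Δ' = TensorProduct.map LinearMap.id P ∘ₗ Coalgebra.comul +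
      TensorProduct.map P LinearMap.id ∘ₗ Coalgebra.comul +
        lam • (Coalgebra.comul : C →ₗ[k] C ⊗[k] C))
    (ρ' : M →ₗ[k] C ⊗[k] M)
    (hρ' : ρ' = TensorProduct.map P LinearMap.id ∘ₗ ρ +
      TensorProduct.map LinearMap.id T ∘ₗ ρ + lam • ρ) :
    -- (c) `(M,ρ')` is a noncounitary comodule over `(C,Δ')`:
    TensorProduct.map LinearMap.id ρ' ∘ₗ ρ' =
      (TensorProduct.assoc k C C M).toLinearMap ∘ₗ
        TensorProduct.map Δ' LinearMap.id ∘ₗ ρ' ∧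
    -- (d) `(M,P,T)` is a Rota-Baxter paired comodule of weight `lam` w.r.t. `ρ'`:
    RBPairedComodule ρ' P T lam := by
  unfold RBCoalgebra at hRBC
  unfold RBPairedComodule at hRB ⊢
  constructor
  · -- part (c)
    have hΔ'P : Δ' ∘ₗ P = TensorProduct.map P P ∘ₗ Coalgebra.comul := by
      rw [hΔ', hRBC]
      simp only [LinearMap.add_comp, LinearMap.smul_comp, LinearMap.comp_assoc]
      abel
    -- the key commuting lemma
    have H : ∀ (a b : C →ₗ[k] C) (S : M →ₗ[k] M),
        (TensorProduct.assoc k C C M).toLinearMap ∘ₗ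
          TensorProduct.map (TensorProduct.map a b ∘ₗ Coalgebra.comul) S ∘ₗ ρ =
        TensorProduct.map a (TensorProduct.map b S ∘ₗ ρ) ∘ₗ ρ := by
      intro a b S
      have h1 : TensorProduct.map (TensorProduct.map a b ∘ₗ Coalgebra.comul) S
          = TensorProduct.map (TensorProduct.map a b) S ∘ₗ
              TensorProduct.map Coalgebra.comul LinearMap.id := by
        rw [← TensorProduct.map_comp, LinearMap.comp_id]
      rw [h1, LinearMap.comp_assoc, ← LinearMap.comp_assoc _ _ (TensorProduct.assoc k C C M).toLinearMap,
        ← TensorProduct.map_map_comp_assoc_eq, LinearMap.comp_assoc, hcoassoc,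
        ← LinearMap.comp_assoc, ← TensorProduct.map_comp, LinearMap.comp_id]
    have HΔ : ∀ (S : M →ₗ[k] M),
        (TensorProduct.assoc k C C M).toLinearMap ∘ₗ
          TensorProduct.map Coalgebra.comul S ∘ₗ ρ =
        TensorProduct.map LinearMap.id (TensorProduct.map LinearMap.id S ∘ₗ ρ) ∘ₗ ρ := by
      intro S
      have := H LinearMap.id LinearMap.id S
      simpa only [TensorProduct.map_id, LinearMap.id_comp] using this
    have Ffuse : ∀ (g : M →ₗ[k] C ⊗[k] M) (a : C →ₗ[k] C) (S : M →ₗ[k] M),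
        TensorProduct.map LinearMap.id g ∘ₗ (TensorProduct.map a S ∘ₗ ρ) =
          TensorProduct.map a (g ∘ₗ S) ∘ₗ ρ := by
      intro g a S
      rw [← LinearMap.comp_assoc, ← TensorProduct.map_comp, LinearMap.id_comp]
    have hR1 : (TensorProduct.assoc k C C M).toLinearMap ∘ₗ
        TensorProduct.map Δ' LinearMap.id ∘ₗ TensorProduct.map P LinearMap.id ∘ₗ ρ =
        TensorProduct.map P (TensorProduct.map P LinearMap.id ∘ₗ ρ) ∘ₗ ρ := by
      have e : TensorProduct.map Δ' (LinearMap.id : M →ₗ[k] M) ∘ₗ TensorProduct.map P LinearMap.id =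
          TensorProduct.map (TensorProduct.map P P ∘ₗ Coalgebra.comul) LinearMap.id := by
        rw [← TensorProduct.map_comp, LinearMap.id_comp, hΔ'P]
      rw [← LinearMap.comp_assoc ρ (TensorProduct.map P LinearMap.id) (TensorProduct.map Δ' LinearMap.id),
        e, H]
    have hR2 : (TensorProduct.assoc k C C M).toLinearMap ∘ₗ
        TensorProduct.map Δ' LinearMap.id ∘ₗ TensorProduct.map LinearMap.id T ∘ₗ ρ =
        TensorProduct.map LinearMap.id (TensorProduct.map P LinearMap.id ∘ₗ ρ ∘ₗ T) ∘ₗ ρ +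
        TensorProduct.map LinearMap.id (TensorProduct.map LinearMap.id T ∘ₗ ρ ∘ₗ T) ∘ₗ ρ +
        lam • (TensorProduct.map LinearMap.id (ρ ∘ₗ T) ∘ₗ ρ) +
        TensorProduct.map P (TensorProduct.map LinearMap.id T ∘ₗ ρ) ∘ₗ ρ +
        lam • (TensorProduct.map LinearMap.id (TensorProduct.map LinearMap.id T ∘ₗ ρ) ∘ₗ ρ) := by
      have e : TensorProduct.map Δ' (LinearMap.id : M →ₗ[k] M) ∘ₗ TensorProduct.map LinearMap.id T =
          TensorProduct.map Δ' T := by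
        rw [← TensorProduct.map_comp, LinearMap.comp_id, LinearMap.id_comp]
      rw [← LinearMap.comp_assoc ρ, e, hΔ']
      simp only [TensorProduct.map_add_left, TensorProduct.map_smul_left, LinearMap.comp_add,
        LinearMap.add_comp, LinearMap.comp_smul, LinearMap.smul_comp, LinearMap.comp_assoc]
      rw [H LinearMap.id P T, H P LinearMap.id T, HΔ T, hRB]
      simp only [TensorProduct.map_add_right, TensorProduct.map_smul_right, LinearMap.add_comp,
        LinearMap.smul_comp, LinearMap.comp_assoc]
    have hR3 : (TensorProduct.assoc k C C M).toLinearMap ∘ₗ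
        TensorProduct.map Δ' LinearMap.id ∘ₗ ρ =
        TensorProduct.map LinearMap.id (TensorProduct.map P LinearMap.id ∘ₗ ρ) ∘ₗ ρ +
        TensorProduct.map P (TensorProduct.map LinearMap.id LinearMap.id ∘ₗ ρ) ∘ₗ ρ +
        lam • (TensorProduct.map LinearMap.id (TensorProduct.map LinearMap.id LinearMap.id ∘ₗ ρ) ∘ₗ ρ) := by
      rw [hΔ']
      simp only [TensorProduct.map_add_left, TensorProduct.map_smul_left, LinearMap.comp_add,
        LinearMap.add_comp, LinearMap.comp_smul, LinearMap.smul_comp, LinearMap.comp_assoc]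
      rw [H LinearMap.id P LinearMap.id, H P LinearMap.id LinearMap.id, HΔ LinearMap.id]
    rw [hρ']
    simp only [LinearMap.comp_add, LinearMap.add_comp, LinearMap.comp_smul, LinearMap.smul_comp,
      TensorProduct.map_add_right, TensorProduct.map_smul_right, LinearMap.comp_assoc]
    rw [hR1, hR2, hR3]
    simp only [Ffuse, TensorProduct.map_id, LinearMap.comp_id, LinearMap.id_comp, smul_add,
      LinearMap.comp_assoc, smul_smul]
    abel
  · -- part (d)
    subst hρ'
    have e1 : TensorProduct.map P T ∘ₗ TensorProduct.map P (LinearMap.id (R := k) (M := M)) =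
        TensorProduct.map P LinearMap.id ∘ₗ TensorProduct.map P T := by
      rw [← TensorProduct.map_comp, ← TensorProduct.map_comp]; simp
    have e2 : TensorProduct.map P T ∘ₗ TensorProduct.map (LinearMap.id (R := k) (M := C)) T =
        TensorProduct.map LinearMap.id T ∘ₗ TensorProduct.map P T := by
      rw [← TensorProduct.map_comp, ← TensorProduct.map_comp]; simp
    simp only [LinearMap.comp_add, LinearMap.add_comp, LinearMap.comp_smul, LinearMap.smul_comp,
      ← LinearMap.comp_assoc, e1, e2]
    simp only [LinearMap.comp_assoc, hRB]
    simp only [LinearMap.comp_add, LinearMap.add_comp, LinearMap.comp_smul, LinearMap.smul_comp,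
      LinearMap.comp_assoc, smul_add]
end

section
/- Let (C,P) be a Rota-Baxter coalgebra of weight λ and (M,P,T) a Rota-Baxter paired left C-comodule of weight λ with coaction ρ. Define Δ′ = (id⊗P)∘Δ + (P⊗id)∘Δ + λ·Δ, ρ′ = (P⊗id)∘ρ + (id⊗T)∘ρ + λ·ρ, P̄ = -P - λ·id_C and T̄ = -T - λ·id_M. Then (P̄⊗T̄)∘ρ′ = (P̄⊗id)∘ρ′∘T̄ + (id⊗T̄)∘ρ′∘T̄ + λ·ρ′∘T̄, i.e. (M, P̄, T̄) is a Rota-Baxter paired comodule of weight λ with respect to the coaction ρ′ over (C,Δ′). -/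
open TensorProduct

theorem stmt15 {k C M : Type*} [Field k] [AddCommGroup C] [Module k C] [Coalgebra k C]
    [AddCommGroup M] [Module k M] (ρ : M →ₗ[k] C ⊗[k] M)
    -- `M` is a left `C`-comodule:
    (hcoassoc : (TensorProduct.assoc k C C M).toLinearMap ∘ₗ
        TensorProduct.map Coalgebra.comul LinearMap.id ∘ₗ ρ =
        TensorProduct.map LinearMap.id ρ ∘ₗ ρ)
    (hcounit : (TensorProduct.lid k M).toLinearMap ∘ₗ
        TensorProduct.map Coalgebra.counit LinearMap.id ∘ₗ ρ = LinearMap.id)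
    (lam : k) (P : C →ₗ[k] C) (T : M →ₗ[k] M)
    -- `(C,P)` is a Rota-Baxter coalgebra and `(M,P,T)` a Rota-Baxter paired
    -- `C`-comodule, both of weight `lam`:
    (hRBC : RBCoalgebra (Coalgebra.comul : C →ₗ[k] C ⊗[k] C) P lam)
    (hRB : RBPairedComodule ρ P T lam)
    -- `Δ' = (id⊗P)∘Δ + (P⊗id)∘Δ + lam•Δ` and `ρ' = (P⊗id)∘ρ + (id⊗T)∘ρ + lam•ρ`:
    (Δ' : C →ₗ[k] C ⊗[k] C)
    (hΔ' : Δ' = TensorProduct.map LinearMap.id P ∘ₗ Coalgebra.comul +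
      TensorProduct.map P LinearMap.id ∘ₗ Coalgebra.comul +
        lam • (Coalgebra.comul : C →ₗ[k] C ⊗[k] C))
    (ρ' : M →ₗ[k] C ⊗[k] M)
    (hρ' : ρ' = TensorProduct.map P LinearMap.id ∘ₗ ρ +
      TensorProduct.map LinearMap.id T ∘ₗ ρ + lam • ρ) :
    -- with `P̄ = -P - lam•id` and `T̄ = -T - lam•id`,
    ∀ (Pbar : C →ₗ[k] C) (Tbar : M →ₗ[k] M),
      Pbar = -P - lam • LinearMap.id →
      Tbar = -T - lam • LinearMap.id →
      -- `(M, P̄, T̄)` is a Rota-Baxter paired comodule of weight `lam` w.r.t. `ρ'`: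
      RBPairedComodule ρ' Pbar Tbar lam := by
  intro Pbar Tbar hPbar hTbar
  unfold RBPairedComodule at hRB ⊢
  set p : C ⊗[k] M →ₗ[k] C ⊗[k] M := TensorProduct.map P LinearMap.id with hp
  set t : C ⊗[k] M →ₗ[k] C ⊗[k] M := TensorProduct.map LinearMap.id T with ht
  set s : C ⊗[k] M →ₗ[k] C ⊗[k] M := p + t + lam • LinearMap.id with hs
  have hρs : ρ' = s ∘ₗ ρ := by
    rw [hρ', hs]
    simp [LinearMap.add_comp, LinearMap.smul_comp]
  -- p and t commute, s commutes with p ∘ₗ t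
  have hpt : p ∘ₗ t = t ∘ₗ p := by
    apply TensorProduct.ext'
    intro x y
    simp [hp, ht]
  have hcomm : (p ∘ₗ t) ∘ₗ s = s ∘ₗ (p ∘ₗ t) := by
    apply TensorProduct.ext'
    intro x y
    simp [hp, ht, hs, tmul_smul, smul_tmul']
  have hRB2 : (p ∘ₗ t) ∘ₗ ρ = s ∘ₗ (ρ ∘ₗ T) := by
    have hPT : TensorProduct.map P T = p ∘ₗ t := by
      apply TensorProduct.ext'
      intro x y
      simp [hp, ht]
    rw [← hPT, hRB, hs]
    simp [LinearMap.add_comp, LinearMap.smul_comp]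
  have hA2 : TensorProduct.map Pbar Tbar = p ∘ₗ t + lam • s := by
    apply TensorProduct.ext'
    intro x y
    simp [hp, ht, hs, hPbar, hTbar, sub_tmul, tmul_sub, neg_tmul, tmul_neg,
      smul_tmul', tmul_smul, smul_smul, smul_sub, smul_neg]
    module
  have hB : TensorProduct.map Pbar (LinearMap.id : M →ₗ[k] M) =
      -(p + lam • (LinearMap.id : C ⊗[k] M →ₗ[k] C ⊗[k] M)) := by
    apply TensorProduct.ext'
    intro x y
    simp [hp, hPbar, sub_tmul, neg_tmul, smul_tmul']
    module
  have hC : TensorProduct.map (LinearMap.id : C →ₗ[k] C) Tbar =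
      -(t + lam • (LinearMap.id : C ⊗[k] M →ₗ[k] C ⊗[k] M)) := by
    apply TensorProduct.ext'
    intro x y
    simp [ht, hTbar, tmul_sub, tmul_neg, tmul_smul]
    module
  have hρT : ρ' ∘ₗ Tbar = -(s ∘ₗ (ρ ∘ₗ T)) - lam • (s ∘ₗ ρ) := by
    rw [hρs, hTbar]
    simp only [LinearMap.comp_assoc, LinearMap.comp_sub, LinearMap.comp_neg,
      LinearMap.comp_smul, LinearMap.comp_id]
  have key : ∀ (Y : M →ₗ[k] C ⊗[k] M),
      (-(p + lam • (LinearMap.id : C ⊗[k] M →ₗ[k] C ⊗[k] M))) ∘ₗ Y +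
        (-(t + lam • (LinearMap.id : C ⊗[k] M →ₗ[k] C ⊗[k] M))) ∘ₗ Y + lam • Y =
        -(s ∘ₗ Y) := by
    intro Y
    rw [hs]
    simp only [LinearMap.neg_comp, LinearMap.add_comp, LinearMap.smul_comp,
      LinearMap.id_comp]
    abel
  rw [hA2, hB, hC, hρT, hρs]
  clear_value p t s
  rw [LinearMap.add_comp, LinearMap.smul_comp]
  rw [← LinearMap.comp_assoc, hcomm, LinearMap.comp_assoc, hRB2]
  rw [key]
  rw [LinearMap.comp_sub, LinearMap.comp_neg, LinearMap.comp_smul]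
  abel
end

section
/- Let (C,Q) be a Rota-Baxter coalgebra of weight -1 and (M,Q,T) a Rota-Baxter paired left C-comodule of weight -1 with coaction ρ. Define Δ̃ : C → C⊗C by Δ̃(c) = Q(c₁)⊗c₂ - Q(c₂)⊗c₁ - c₁⊗c₂ and ρ̃ : M → C⊗M by ρ̃(m) = Q(m₍₋₁₎)⊗m₍₀₎ + m₍₋₁₎⊗T(m₍₀₎) - m₍₋₁₎⊗m₍₀₎. Then (M,ρ̃) is a left pre-Lie comodule over the pre-Lie coalgebra (C,Δ̃), i.e. setting ρ_M = (id⊗ρ̃)∘ρ̃ - (Δ̃⊗id)∘ρ̃, one has ρ_M = (τ⊗id)∘ρ_M, where τ : C⊗C → C⊗C is the flip c⊗d ↦ d⊗c. -/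
open TensorProduct

/-- Fusion of consecutive tensor-product maps (composed with a further map). -/
private lemma mapfuse {k : Type*} [CommSemiring k]
    {A B A' B' A'' B'' N : Type*}
    [AddCommMonoid A] [AddCommMonoid B] [AddCommMonoid A'] [AddCommMonoid B']
    [AddCommMonoid A''] [AddCommMonoid B''] [AddCommMonoid N]
    [Module k A] [Module k B] [Module k A'] [Module k B'] [Module k A'']
    [Module k B''] [Module k N]
    (f₂ : A' →ₗ[k] A'') (f₁ : A →ₗ[k] A') (g₂ : B' →ₗ[k] B'') (g₁ : B →ₗ[k] B')
    (w : N →ₗ[k] A ⊗[k] B) :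
    TensorProduct.map f₂ g₂ ∘ₗ (TensorProduct.map f₁ g₁ ∘ₗ w) =
      TensorProduct.map (f₂ ∘ₗ f₁) (g₂ ∘ₗ g₁) ∘ₗ w := by
  rw [TensorProduct.map_comp, LinearMap.comp_assoc]

/-- Naturality of the (inverse) associator. -/
private lemma natA {k A B P A' B' P' : Type*} [CommSemiring k]
    [AddCommMonoid A] [AddCommMonoid B] [AddCommMonoid P]
    [AddCommMonoid A'] [AddCommMonoid B'] [AddCommMonoid P']
    [Module k A] [Module k B] [Module k P] [Module k A'] [Module k B'] [Module k P']
    (f : A →ₗ[k] A') (g : B →ₗ[k] B') (h : P →ₗ[k] P') :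
    (TensorProduct.assoc k A' B' P').symm.toLinearMap ∘ₗ
        TensorProduct.map f (TensorProduct.map g h)
      = TensorProduct.map (TensorProduct.map f g) h ∘ₗ
        (TensorProduct.assoc k A B P).symm.toLinearMap := by
  refine TensorProduct.ext' fun x y => ?_
  induction y using TensorProduct.induction_on with
  | zero => simp
  | tmul b p => simp
  | add u v hu hv =>
      simp only [tmul_add, map_add] at hu hv ⊢
      rw [hu, hv]

/-- Naturality of the flip. -/
private lemma commnat {k A B A' B' : Type*} [CommSemiring k]
    [AddCommMonoid A] [AddCommMonoid B] [AddCommMonoid A'] [AddCommMonoid B']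
    [Module k A] [Module k B] [Module k A'] [Module k B']
    (f : A →ₗ[k] A') (g : B →ₗ[k] B') :
    (TensorProduct.comm k A' B').toLinearMap ∘ₗ TensorProduct.map f g =
      TensorProduct.map g f ∘ₗ (TensorProduct.comm k A B).toLinearMap := by
  refine TensorProduct.ext' fun x y => ?_
  simp

private lemma mapSubLeft {k A B A' B' : Type*} [CommSemiring k]
    [AddCommMonoid A] [AddCommMonoid B] [AddCommGroup A'] [AddCommGroup B']
    [Module k A] [Module k B] [Module k A'] [Module k B']
    (f₁ f₂ : A →ₗ[k] A') (g : B →ₗ[k] B') :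
    TensorProduct.map (f₁ - f₂) g = TensorProduct.map f₁ g - TensorProduct.map f₂ g := by
  refine TensorProduct.ext' fun x y => ?_
  simp [sub_tmul]

private lemma mapSubRight {k A B A' B' : Type*} [CommSemiring k]
    [AddCommMonoid A] [AddCommMonoid B] [AddCommGroup A'] [AddCommGroup B']
    [Module k A] [Module k B] [Module k A'] [Module k B']
    (f : A →ₗ[k] A') (g₁ g₂ : B →ₗ[k] B') :
    TensorProduct.map f (g₁ - g₂) = TensorProduct.map f g₁ - TensorProduct.map f g₂ := by
  refine TensorProduct.ext' fun x y => ?_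
  simp [tmul_sub]

theorem stmt16 {k C M : Type*} [Field k] [AddCommGroup C] [Module k C] [Coalgebra k C]
    [AddCommGroup M] [Module k M] (ρ : M →ₗ[k] C ⊗[k] M)
    -- `M` is a left `C`-comodule:
    (hcoassoc : (TensorProduct.assoc k C C M).toLinearMap ∘ₗ
        TensorProduct.map Coalgebra.comul LinearMap.id ∘ₗ ρ =
        TensorProduct.map LinearMap.id ρ ∘ₗ ρ)
    (hcounit : (TensorProduct.lid k M).toLinearMap ∘ₗ
        TensorProduct.map Coalgebra.counit LinearMap.id ∘ₗ ρ = LinearMap.id)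
    (Q : C →ₗ[k] C) (T : M →ₗ[k] M)
    -- `(C,Q)` is a Rota-Baxter coalgebra of weight `-1` and `(M,Q,T)` a Rota-Baxter
    -- paired `C`-comodule of weight `-1`:
    (hRBC : RBCoalgebra (Coalgebra.comul : C →ₗ[k] C ⊗[k] C) Q (-1))
    (hRB : RBPairedComodule ρ Q T (-1))
    -- `Δ̃(c) = Q(c₁)⊗c₂ - Q(c₂)⊗c₁ - c₁⊗c₂`:
    (Δt : C →ₗ[k] C ⊗[k] C)
    (hΔt : Δt = TensorProduct.map Q LinearMap.id ∘ₗ Coalgebra.comul -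
      TensorProduct.map Q LinearMap.id ∘ₗ (TensorProduct.comm k C C).toLinearMap ∘ₗ
        Coalgebra.comul - (Coalgebra.comul : C →ₗ[k] C ⊗[k] C))
    -- `ρ̃(m) = Q(m₋₁)⊗m₀ + m₋₁⊗T(m₀) - m₋₁⊗m₀`:
    (ρt : M →ₗ[k] C ⊗[k] M)
    (hρt : ρt = TensorProduct.map Q LinearMap.id ∘ₗ ρ +
      TensorProduct.map LinearMap.id T ∘ₗ ρ - ρ)
    -- `ρ_M = (id⊗ρ̃)∘ρ̃ - (Δ̃⊗id)∘ρ̃` (viewed in `(C⊗C)⊗M`):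
    (ρM : M →ₗ[k] (C ⊗[k] C) ⊗[k] M)
    (hρM : ρM = (TensorProduct.assoc k C C M).symm.toLinearMap ∘ₗ
      TensorProduct.map LinearMap.id ρt ∘ₗ ρt - TensorProduct.map Δt LinearMap.id ∘ₗ ρt) :
    -- `(M,ρ̃)` is a left pre-Lie comodule over `(C,Δ̃)`: `ρ_M = (τ⊗id)∘ρ_M`:
    ρM = TensorProduct.map (TensorProduct.comm k C C).toLinearMap LinearMap.id ∘ₗ ρM := by
  have hRB' := hRB
  rw [RBPairedComodule] at hRB'
  have hRBC' := hRBC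
  rw [RBCoalgebra] at hRBC'
  -- `ρt ∘ T = (Q ⊗ T) ∘ ρ`
  have hρtT : ρt ∘ₗ T = TensorProduct.map Q T ∘ₗ ρ := by
    rw [hρt]
    simp only [LinearMap.sub_comp, LinearMap.add_comp, LinearMap.comp_assoc]
    rw [hRB']
    module
  -- rearranged Rota-Baxter coalgebra identity
  have hQ1 : TensorProduct.map Q LinearMap.id ∘ₗ ((Coalgebra.comul : C →ₗ[k] C ⊗[k] C) ∘ₗ Q) =
      TensorProduct.map Q Q ∘ₗ (Coalgebra.comul : C →ₗ[k] C ⊗[k] C)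
        - TensorProduct.map LinearMap.id Q ∘ₗ ((Coalgebra.comul : C →ₗ[k] C ⊗[k] C) ∘ₗ Q)
        + (Coalgebra.comul : C →ₗ[k] C ⊗[k] C) ∘ₗ Q := by
    rw [hRBC']
    module
  -- swap lemma
  have hcswap : ∀ X : C →ₗ[k] C ⊗[k] C,
      TensorProduct.map Q LinearMap.id ∘ₗ ((TensorProduct.comm k C C).toLinearMap ∘ₗ X) =
        (TensorProduct.comm k C C).toLinearMap ∘ₗ (TensorProduct.map LinearMap.id Q ∘ₗ X) := by
    intro X
    rw [← LinearMap.comp_assoc, ← commnat, LinearMap.comp_assoc]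
  have hττ : (TensorProduct.comm k C C).toLinearMap ∘ₗ (TensorProduct.comm k C C).toLinearMap
      = (LinearMap.id : C ⊗[k] C →ₗ[k] C ⊗[k] C) := by
    refine TensorProduct.ext' fun x y => ?_
    simp
  -- `Δt ∘ Q`
  have hΔtQ : Δt ∘ₗ Q = TensorProduct.map Q Q ∘ₗ (Coalgebra.comul : C →ₗ[k] C ⊗[k] C)
      - TensorProduct.map LinearMap.id Q ∘ₗ ((Coalgebra.comul : C →ₗ[k] C ⊗[k] C) ∘ₗ Q)
      - (TensorProduct.comm k C C).toLinearMap ∘ₗ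
          (TensorProduct.map LinearMap.id Q ∘ₗ ((Coalgebra.comul : C →ₗ[k] C ⊗[k] C) ∘ₗ Q)) := by
    rw [hΔt]
    simp only [LinearMap.sub_comp, LinearMap.comp_assoc]
    rw [hcswap, hQ1]
    abel
  -- coassociativity reorganized
  have hD' : (TensorProduct.assoc k C C M).symm.toLinearMap ∘ₗ
      (TensorProduct.map LinearMap.id ρ ∘ₗ ρ)
      = TensorProduct.map Coalgebra.comul LinearMap.id ∘ₗ ρ := by
    rw [← hcoassoc, ← LinearMap.comp_assoc]
    refine LinearMap.ext fun m => ?_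
    simp
  -- workhorse lemmas
  have hwork : ∀ (f g : C →ₗ[k] C) (h : M →ₗ[k] M),
      (TensorProduct.assoc k C C M).symm.toLinearMap ∘ₗ
        (TensorProduct.map f (TensorProduct.map g h) ∘ₗ (TensorProduct.map LinearMap.id ρ ∘ₗ ρ))
      = TensorProduct.map (TensorProduct.map f g ∘ₗ Coalgebra.comul) h ∘ₗ ρ := by
    intro f g h
    rw [← LinearMap.comp_assoc, natA, LinearMap.comp_assoc, hD', mapfuse, LinearMap.comp_id]
  have hwork2 : ∀ (f g : C →ₗ[k] C) (h : M →ₗ[k] M),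
      (TensorProduct.assoc k C C M).symm.toLinearMap ∘ₗ
        (TensorProduct.map f (TensorProduct.map g h ∘ₗ ρ) ∘ₗ ρ)
      = TensorProduct.map (TensorProduct.map f g ∘ₗ Coalgebra.comul) h ∘ₗ ρ := by
    intro f g h
    have e : TensorProduct.map f (TensorProduct.map g h ∘ₗ ρ)
        = TensorProduct.map f (TensorProduct.map g h) ∘ₗ TensorProduct.map LinearMap.id ρ := by
      rw [← TensorProduct.map_comp, LinearMap.comp_id]
    rw [e, LinearMap.comp_assoc, hwork f g h]
  have hwork2ρ : ∀ f : C →ₗ[k] C,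
      (TensorProduct.assoc k C C M).symm.toLinearMap ∘ₗ (TensorProduct.map f ρ ∘ₗ ρ)
      = TensorProduct.map (TensorProduct.map f LinearMap.id ∘ₗ Coalgebra.comul) LinearMap.id ∘ₗ ρ := by
    intro f
    have e : TensorProduct.map f ρ
        = TensorProduct.map f (TensorProduct.map LinearMap.id LinearMap.id ∘ₗ ρ) := by
      rw [TensorProduct.map_id, LinearMap.id_comp]
    rw [e, hwork2]
  -- the three rows of the `(id ⊗ ρt) ∘ ρt` computation
  have ha : (TensorProduct.assoc k C C M).symm.toLinearMap ∘ₗ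
      (TensorProduct.map LinearMap.id ρt ∘ₗ (TensorProduct.map Q LinearMap.id ∘ₗ ρ))
      = TensorProduct.map (TensorProduct.map Q Q ∘ₗ Coalgebra.comul) LinearMap.id ∘ₗ ρ
        + TensorProduct.map (TensorProduct.map Q LinearMap.id ∘ₗ Coalgebra.comul) T ∘ₗ ρ
        - TensorProduct.map (TensorProduct.map Q LinearMap.id ∘ₗ Coalgebra.comul) LinearMap.id ∘ₗ ρ := by
    have e : TensorProduct.map LinearMap.id ρt ∘ₗ (TensorProduct.map Q LinearMap.id ∘ₗ ρ)
        = TensorProduct.map Q ρt ∘ₗ ρ := by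
      rw [mapfuse, LinearMap.id_comp, LinearMap.comp_id]
    rw [e, hρt, mapSubRight, TensorProduct.map_add_right]
    simp only [LinearMap.add_comp, LinearMap.sub_comp, LinearMap.comp_add, LinearMap.comp_sub]
    rw [hwork2 Q Q LinearMap.id, hwork2 Q LinearMap.id T, hwork2ρ Q]
  have hb : (TensorProduct.assoc k C C M).symm.toLinearMap ∘ₗ
      (TensorProduct.map LinearMap.id ρt ∘ₗ (TensorProduct.map LinearMap.id T ∘ₗ ρ))
      = TensorProduct.map (TensorProduct.map LinearMap.id Q ∘ₗ Coalgebra.comul) T ∘ₗ ρ := by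
    have e : TensorProduct.map LinearMap.id ρt ∘ₗ (TensorProduct.map LinearMap.id T ∘ₗ ρ)
        = TensorProduct.map LinearMap.id (TensorProduct.map Q T) ∘ₗ
            (TensorProduct.map LinearMap.id ρ ∘ₗ ρ) := by
      rw [mapfuse, mapfuse, hρtT]
    rw [e, hwork LinearMap.id Q T]
  have hc : (TensorProduct.assoc k C C M).symm.toLinearMap ∘ₗ
      (TensorProduct.map LinearMap.id ρt ∘ₗ ρ)
      = TensorProduct.map (TensorProduct.map LinearMap.id Q ∘ₗ Coalgebra.comul) LinearMap.id ∘ₗ ρ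
        + TensorProduct.map Coalgebra.comul T ∘ₗ ρ
        - TensorProduct.map Coalgebra.comul LinearMap.id ∘ₗ ρ := by
    rw [hρt, mapSubRight, TensorProduct.map_add_right]
    simp only [LinearMap.add_comp, LinearMap.sub_comp, LinearMap.comp_add, LinearMap.comp_sub]
    rw [hwork2 LinearMap.id Q LinearMap.id, hwork2 LinearMap.id LinearMap.id T, hD']
    simp only [TensorProduct.map_id, LinearMap.id_comp]
  -- full first piece
  have hA : (TensorProduct.assoc k C C M).symm.toLinearMap ∘ₗ
      TensorProduct.map LinearMap.id ρt ∘ₗ ρt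
      = TensorProduct.map (TensorProduct.map Q Q ∘ₗ Coalgebra.comul) LinearMap.id ∘ₗ ρ
        + TensorProduct.map (TensorProduct.map Q LinearMap.id ∘ₗ Coalgebra.comul) T ∘ₗ ρ
        - TensorProduct.map (TensorProduct.map Q LinearMap.id ∘ₗ Coalgebra.comul) LinearMap.id ∘ₗ ρ
        + TensorProduct.map (TensorProduct.map LinearMap.id Q ∘ₗ Coalgebra.comul) T ∘ₗ ρ
        - TensorProduct.map (TensorProduct.map LinearMap.id Q ∘ₗ Coalgebra.comul) LinearMap.id ∘ₗ ρ
        - TensorProduct.map Coalgebra.comul T ∘ₗ ρ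
        + TensorProduct.map Coalgebra.comul LinearMap.id ∘ₗ ρ := by
    nth_rewrite 2 [hρt]
    simp only [LinearMap.comp_add, LinearMap.comp_sub]
    rw [ha, hb, hc]
    abel
  -- the three rows of the `(Δt ⊗ id) ∘ ρt` computation
  have hb1 : TensorProduct.map Δt LinearMap.id ∘ₗ (TensorProduct.map Q LinearMap.id ∘ₗ ρ)
      = TensorProduct.map (TensorProduct.map Q Q ∘ₗ Coalgebra.comul) LinearMap.id ∘ₗ ρ
        - TensorProduct.map (TensorProduct.map LinearMap.id Q ∘ₗ ((Coalgebra.comul : C →ₗ[k] C ⊗[k] C) ∘ₗ Q)) LinearMap.id ∘ₗ ρ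
        - TensorProduct.map ((TensorProduct.comm k C C).toLinearMap ∘ₗ
            (TensorProduct.map LinearMap.id Q ∘ₗ ((Coalgebra.comul : C →ₗ[k] C ⊗[k] C) ∘ₗ Q))) LinearMap.id ∘ₗ ρ := by
    rw [mapfuse, LinearMap.id_comp, hΔtQ, mapSubLeft, mapSubLeft]
    simp only [LinearMap.sub_comp]
  have hb2 : TensorProduct.map Δt LinearMap.id ∘ₗ (TensorProduct.map LinearMap.id T ∘ₗ ρ)
      = TensorProduct.map (TensorProduct.map Q LinearMap.id ∘ₗ Coalgebra.comul) T ∘ₗ ρ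
        - TensorProduct.map (TensorProduct.map Q LinearMap.id ∘ₗ
            ((TensorProduct.comm k C C).toLinearMap ∘ₗ Coalgebra.comul)) T ∘ₗ ρ
        - TensorProduct.map Coalgebra.comul T ∘ₗ ρ := by
    rw [mapfuse, LinearMap.comp_id, LinearMap.id_comp, hΔt, mapSubLeft, mapSubLeft]
    simp only [LinearMap.sub_comp]
  have hb3 : TensorProduct.map Δt LinearMap.id ∘ₗ ρ
      = TensorProduct.map (TensorProduct.map Q LinearMap.id ∘ₗ Coalgebra.comul) LinearMap.id ∘ₗ ρ
        - TensorProduct.map (TensorProduct.map Q LinearMap.id ∘ₗ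
            ((TensorProduct.comm k C C).toLinearMap ∘ₗ Coalgebra.comul)) LinearMap.id ∘ₗ ρ
        - TensorProduct.map Coalgebra.comul LinearMap.id ∘ₗ ρ := by
    rw [hΔt, mapSubLeft, mapSubLeft]
    simp only [LinearMap.sub_comp]
  -- full second piece
  have hB : TensorProduct.map Δt LinearMap.id ∘ₗ ρt
      = TensorProduct.map (TensorProduct.map Q Q ∘ₗ Coalgebra.comul) LinearMap.id ∘ₗ ρ
        - TensorProduct.map (TensorProduct.map LinearMap.id Q ∘ₗ ((Coalgebra.comul : C →ₗ[k] C ⊗[k] C) ∘ₗ Q)) LinearMap.id ∘ₗ ρ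
        - TensorProduct.map ((TensorProduct.comm k C C).toLinearMap ∘ₗ
            (TensorProduct.map LinearMap.id Q ∘ₗ ((Coalgebra.comul : C →ₗ[k] C ⊗[k] C) ∘ₗ Q))) LinearMap.id ∘ₗ ρ
        + TensorProduct.map (TensorProduct.map Q LinearMap.id ∘ₗ Coalgebra.comul) T ∘ₗ ρ
        - TensorProduct.map (TensorProduct.map Q LinearMap.id ∘ₗ
            ((TensorProduct.comm k C C).toLinearMap ∘ₗ Coalgebra.comul)) T ∘ₗ ρ
        - TensorProduct.map Coalgebra.comul T ∘ₗ ρ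
        - TensorProduct.map (TensorProduct.map Q LinearMap.id ∘ₗ Coalgebra.comul) LinearMap.id ∘ₗ ρ
        + TensorProduct.map (TensorProduct.map Q LinearMap.id ∘ₗ
            ((TensorProduct.comm k C C).toLinearMap ∘ₗ Coalgebra.comul)) LinearMap.id ∘ₗ ρ
        + TensorProduct.map Coalgebra.comul LinearMap.id ∘ₗ ρ := by
    nth_rewrite 1 [hρt]
    simp only [LinearMap.comp_add, LinearMap.comp_sub]
    rw [hb1, hb2, hb3]
    abel
  -- symmetry rewrites
  have hsA : ∀ h : M →ₗ[k] M,
      TensorProduct.map (TensorProduct.comm k C C).toLinearMap LinearMap.id ∘ₗ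
        (TensorProduct.map (TensorProduct.map LinearMap.id Q ∘ₗ Coalgebra.comul) h ∘ₗ ρ)
      = TensorProduct.map (TensorProduct.map Q LinearMap.id ∘ₗ
          ((TensorProduct.comm k C C).toLinearMap ∘ₗ Coalgebra.comul)) h ∘ₗ ρ := by
    intro h
    rw [mapfuse, LinearMap.id_comp, ← LinearMap.comp_assoc, commnat, LinearMap.comp_assoc]
  have hsB : ∀ h : M →ₗ[k] M,
      TensorProduct.map (TensorProduct.comm k C C).toLinearMap LinearMap.id ∘ₗ
        (TensorProduct.map (TensorProduct.map Q LinearMap.id ∘ₗ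
          ((TensorProduct.comm k C C).toLinearMap ∘ₗ Coalgebra.comul)) h ∘ₗ ρ)
      = TensorProduct.map (TensorProduct.map LinearMap.id Q ∘ₗ Coalgebra.comul) h ∘ₗ ρ := by
    intro h
    rw [mapfuse, LinearMap.id_comp, ← LinearMap.comp_assoc, commnat, LinearMap.comp_assoc,
      ← LinearMap.comp_assoc ((Coalgebra.comul : C →ₗ[k] C ⊗[k] C))
        (TensorProduct.comm k C C).toLinearMap (TensorProduct.comm k C C).toLinearMap,
      hττ, LinearMap.id_comp]
  have hs5 : TensorProduct.map (TensorProduct.comm k C C).toLinearMap LinearMap.id ∘ₗ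
      (TensorProduct.map (TensorProduct.map LinearMap.id Q ∘ₗ ((Coalgebra.comul : C →ₗ[k] C ⊗[k] C) ∘ₗ Q)) LinearMap.id ∘ₗ ρ)
      = TensorProduct.map ((TensorProduct.comm k C C).toLinearMap ∘ₗ
          (TensorProduct.map LinearMap.id Q ∘ₗ ((Coalgebra.comul : C →ₗ[k] C ⊗[k] C) ∘ₗ Q))) LinearMap.id ∘ₗ ρ := by
    rw [mapfuse, LinearMap.id_comp]
  have hs6 : TensorProduct.map (TensorProduct.comm k C C).toLinearMap LinearMap.id ∘ₗ
      (TensorProduct.map ((TensorProduct.comm k C C).toLinearMap ∘ₗ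
          (TensorProduct.map LinearMap.id Q ∘ₗ ((Coalgebra.comul : C →ₗ[k] C ⊗[k] C) ∘ₗ Q))) LinearMap.id ∘ₗ ρ)
      = TensorProduct.map (TensorProduct.map LinearMap.id Q ∘ₗ ((Coalgebra.comul : C →ₗ[k] C ⊗[k] C) ∘ₗ Q)) LinearMap.id ∘ₗ ρ := by
    rw [mapfuse, LinearMap.id_comp, ← LinearMap.comp_assoc, hττ, LinearMap.id_comp]
  rw [hρM, hA, hB]
  simp only [LinearMap.comp_add, LinearMap.comp_sub]
  rw [hsA T, hsA LinearMap.id, hsB T, hsB LinearMap.id, hs5, hs6]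
  abel
end

section
/- Let H be a bialgebra over a field k and M a left H-Hopf module (with action · and coaction ρ). Suppose T : M → M is a Hopf module map, i.e. T(h·m) = h·T(m) and ρ∘T = (id⊗T)∘ρ. Then for λ ∈ k the following are equivalent: (1) (M,T) is a generic Rota-Baxter paired H-Hopf module of weight λ, i.e. for every linear map P : H → H, (M,P,T) is both a Rota-Baxter paired left H-module of weight λ and a Rota-Baxter paired left H-comodule of weight λ; (2) there exists a linear map P : H → H such that (M,P,T) is both a Rota-Baxter paired left H-module of weight λ and a Rota-Baxter paired left H-comodule of weight λ; (3) T is quasi-idempotent of weight λ, i.e. T∘T = -λ·T. -/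
/-!
Because `T` commutes with the action and the coaction, the terms involving `P` cancel in both
Rota-Baxter identities, which reduce to `h · (T ∘ T + lam • T) m = 0` and
`(id ⊗ (T ∘ T + lam • T)) ∘ ρ = 0` respectively. Taking `h = 1` in the first gives
quasi-idempotence, and quasi-idempotence makes both identities hold for every `P`.
-/

open TensorProduct

/-- The Rota-Baxter paired left module condition of weight `lam`, with the
left `H`-action given by `μ : H ⊗ M → M`:
`P(h)·T(m) = T(P(h)·m) + T(h·T(m)) + lam•T(h·m)`. -/
def RBPairedModule {k H M : Type*} [Field k] [Ring H] [Algebra k H]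
    [AddCommGroup M] [Module k M] (μ : H ⊗[k] M →ₗ[k] M)
    (P : H →ₗ[k] H) (T : M →ₗ[k] M) (lam : k) : Prop :=
  ∀ (h : H) (m : M),
    μ (P h ⊗ₜ[k] T m) =
      T (μ (P h ⊗ₜ[k] m)) + T (μ (h ⊗ₜ[k] T m)) + lam • T (μ (h ⊗ₜ[k] m))

section Module

variable {k H M : Type*} [Field k] [Ring H] [Algebra k H] [AddCommGroup M] [Module k M]
  {μ : H ⊗[k] M →ₗ[k] M} {T : M →ₗ[k] M}

theorem rbPairedModule_iff_of_map_act (hT : ∀ (h : H) (m : M), T (μ (h ⊗ₜ[k] m)) = μ (h ⊗ₜ[k] T m))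
    (P : H →ₗ[k] H) (lam : k) :
    RBPairedModule μ P T lam ↔ ∀ (h : H) (m : M), μ (h ⊗ₜ[k] (T (T m) + lam • T m)) = 0 := by
  simp only [RBPairedModule, hT, tmul_add, tmul_smul, map_add, map_smul, add_assoc,
    left_eq_add]

theorem comp_self_eq_neg_smul_of_rbPairedModule (hμ1 : ∀ m : M, μ ((1 : H) ⊗ₜ[k] m) = m)
    (hT : ∀ (h : H) (m : M), T (μ (h ⊗ₜ[k] m)) = μ (h ⊗ₜ[k] T m)) {P : H →ₗ[k] H} {lam : k}
    (hP : RBPairedModule μ P T lam) : T ∘ₗ T = (-lam) • T := by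
  ext m
  have h := (rbPairedModule_iff_of_map_act hT P lam).1 hP 1 m
  rw [hμ1] at h
  simpa [neg_smul] using eq_neg_of_add_eq_zero_left h

theorem rbPairedModule_of_comp_self_eq_neg_smul
    (hT : ∀ (h : H) (m : M), T (μ (h ⊗ₜ[k] m)) = μ (h ⊗ₜ[k] T m)) {lam : k}
    (hTT : T ∘ₗ T = (-lam) • T) (P : H →ₗ[k] H) : RBPairedModule μ P T lam := by
  refine (rbPairedModule_iff_of_map_act hT P lam).2 fun h m => ?_
  rw [← LinearMap.comp_apply T T, hTT, LinearMap.smul_apply, neg_smul, neg_add_cancel,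
    tmul_zero, map_zero]

end Module

section Comodule

variable {k C M : Type*} [Field k] [AddCommGroup C] [Module k C] [AddCommGroup M] [Module k M]
  {ρ : M →ₗ[k] C ⊗[k] M} {T : M →ₗ[k] M}

theorem rbPairedComodule_iff_of_colinear (hT : ρ ∘ₗ T = map LinearMap.id T ∘ₗ ρ)
    (P : C →ₗ[k] C) (lam : k) :
    RBPairedComodule ρ P T lam ↔ map LinearMap.id (T ∘ₗ T + lam • T) ∘ₗ ρ = 0 := by
  have hPT : map P LinearMap.id ∘ₗ ρ ∘ₗ T = map P T ∘ₗ ρ := by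
    rw [hT, ← LinearMap.comp_assoc, ← map_comp, LinearMap.comp_id, LinearMap.id_comp]
  have hTT : map LinearMap.id T ∘ₗ ρ ∘ₗ T + lam • (ρ ∘ₗ T) =
      map LinearMap.id (T ∘ₗ T + lam • T) ∘ₗ ρ := by
    rw [hT, ← LinearMap.comp_assoc, ← map_comp, LinearMap.id_comp, map_add_right,
      map_smul_right, LinearMap.add_comp, LinearMap.smul_comp]
  rw [RBPairedComodule, hPT, add_assoc, hTT, left_eq_add]

theorem rbPairedComodule_of_comp_self_eq_neg_smul (hT : ρ ∘ₗ T = map LinearMap.id T ∘ₗ ρ)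
    {lam : k} (hTT : T ∘ₗ T = (-lam) • T) (P : C →ₗ[k] C) : RBPairedComodule ρ P T lam := by
  rw [rbPairedComodule_iff_of_colinear hT, hTT, neg_smul, neg_add_cancel, map_zero_right,
    LinearMap.zero_comp]

end Comodule

theorem stmt18_general {k H M : Type*} [Field k] [Ring H] [Bialgebra k H]
    [AddCommGroup M] [Module k M]
    -- `M` is a left `H`-module via `μ : H ⊗ M → M`:
    (μ : H ⊗[k] M →ₗ[k] M)
    (hμ1 : ∀ m : M, μ ((1 : H) ⊗ₜ[k] m) = m)
    -- `M` is a left `H`-comodule: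
    (ρ : M →ₗ[k] H ⊗[k] M)
    -- `T` is a Hopf module map:
    (T : M →ₗ[k] M)
    (hTmod : ∀ (h : H) (m : M), T (μ (h ⊗ₜ[k] m)) = μ (h ⊗ₜ[k] T m))
    (hTcol : ρ ∘ₗ T = TensorProduct.map LinearMap.id T ∘ₗ ρ)
    (lam : k) :
    List.TFAE [
      -- (1) `(M,T)` is a generic Rota-Baxter paired `H`-Hopf module of weight `lam`
      ∀ P : H →ₗ[k] H, RBPairedModule μ P T lam ∧ RBPairedComodule ρ P T lam,
      -- (2) there is some `P` making `(M,P,T)` a Rota-Baxter paired `H`-Hopf module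
      ∃ P : H →ₗ[k] H, RBPairedModule μ P T lam ∧ RBPairedComodule ρ P T lam,
      -- (3) `T` is quasi-idempotent of weight `lam`
      T ∘ₗ T = (-lam) • T] := by
  tfae_have 1 → 2 := fun h => ⟨0, h 0⟩
  tfae_have 2 → 3 := fun ⟨_, hmod, _⟩ => comp_self_eq_neg_smul_of_rbPairedModule hμ1 hTmod hmod
  tfae_have 3 → 1 := fun hTT P =>
    ⟨rbPairedModule_of_comp_self_eq_neg_smul hTmod hTT P,
      rbPairedComodule_of_comp_self_eq_neg_smul hTcol hTT P⟩
  tfae_finish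

theorem stmt18 {k H M : Type*} [Field k] [Ring H] [Bialgebra k H]
    [AddCommGroup M] [Module k M]
    -- `M` is a left `H`-module via `μ : H ⊗ M → M`:
    (μ : H ⊗[k] M →ₗ[k] M)
    (hμ1 : ∀ m : M, μ ((1 : H) ⊗ₜ[k] m) = m)
    (hμmul : ∀ (g h : H) (m : M), μ ((g * h) ⊗ₜ[k] m) = μ (g ⊗ₜ[k] μ (h ⊗ₜ[k] m)))
    -- `M` is a left `H`-comodule:
    (ρ : M →ₗ[k] H ⊗[k] M)
    (hcoassoc : (TensorProduct.assoc k H H M).toLinearMap ∘ₗ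
        TensorProduct.map Coalgebra.comul LinearMap.id ∘ₗ ρ =
        TensorProduct.map LinearMap.id ρ ∘ₗ ρ)
    (hcounit : (TensorProduct.lid k M).toLinearMap ∘ₗ
        TensorProduct.map Coalgebra.counit LinearMap.id ∘ₗ ρ = LinearMap.id)
    -- `M` is a left `H`-Hopf module: `ρ(h·m) = h₁m₋₁ ⊗ h₂·m₀`:
    (hhopf : ρ ∘ₗ μ =
      TensorProduct.map (LinearMap.mul' k H) μ ∘ₗ
        (TensorProduct.tensorTensorTensorComm k H H H M).toLinearMap ∘ₗ
          TensorProduct.map Coalgebra.comul ρ)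
    -- `T` is a Hopf module map:
    (T : M →ₗ[k] M)
    (hTmod : ∀ (h : H) (m : M), T (μ (h ⊗ₜ[k] m)) = μ (h ⊗ₜ[k] T m))
    (hTcol : ρ ∘ₗ T = TensorProduct.map LinearMap.id T ∘ₗ ρ)
    (lam : k) :
    List.TFAE [
      -- (1) `(M,T)` is a generic Rota-Baxter paired `H`-Hopf module of weight `lam`
      ∀ P : H →ₗ[k] H, RBPairedModule μ P T lam ∧ RBPairedComodule ρ P T lam,
      -- (2) there is some `P` making `(M,P,T)` a Rota-Baxter paired `H`-Hopf module
      ∃ P : H →ₗ[k] H, RBPairedModule μ P T lam ∧ RBPairedComodule ρ P T lam,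
      -- (3) `T` is quasi-idempotent of weight `lam`
      T ∘ₗ T = (-lam) • T] :=
  stmt18_general μ hμ1 ρ T hTmod hTcol lam
end
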